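/- arXiv:2511.13433 — 4 statements merged into one kernel-verified Lean document; each statement's English description precedes it below -/
import Mathlib

section
/- (Double robustness of the equilibrium-reference AIPW formula against propensity misspecification.) Assume ignorability for Y(0) and ignorability for Y(1). Then for each d ∈ {0,1} and for EVERY 𝒢-measurable function q : Ω → [0,1], E[(Y^obs − g₂)·q + 𝟙{D = d}·g₂] = E[Y(2)·𝟙{D = d}]; that is, the AIPW counterfactual formula recovers E[Y(2) | D = d] even when the propensity model q is arbitrary, provided the pooled outcome regression g₂ is the true one. -/
open MeasureTheory ProbabilityTheory Filter Set
open scoped ENNReal NNReal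


section Helpers

variable {Ω : Type*} {𝒢 : MeasurableSpace Ω} [mΩ : MeasurableSpace Ω]

lemma int_mul_bdd {P : Measure Ω} [IsFiniteMeasure P] {Z w : Ω → ℝ} (hZ : Integrable Z P)
    (hw : AEStronglyMeasurable w P) (hb : ∀ᵐ ω ∂P, ‖w ω‖ ≤ 1) :
    Integrable (fun ω => Z ω * w ω) P := by
  simpa [mul_comm] using hZ.bdd_mul hw hb

lemma bdd_int {P : Measure Ω} [IsFiniteMeasure P] {f : Ω → ℝ}
    (hf : AEStronglyMeasurable f P) (hb : ∀ ω, ‖f ω‖ ≤ 1) : Integrable f P := by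
  simpa using int_mul_bdd (integrable_const (1:ℝ)) hf (Eventually.of_forall hb)

lemma integral_mul_condexp {P : Measure Ω} [IsProbabilityMeasure P]
    (h𝒢le : 𝒢 ≤ mΩ) {h Z : Ω → ℝ}
    (hh : StronglyMeasurable[𝒢] h) (hhb : ∀ ω, ‖h ω‖ ≤ 1) (hZ : Integrable Z P) :
    ∫ ω, h ω * Z ω ∂P = ∫ ω, h ω * (P[Z|𝒢]) ω ∂P := by
  have hint : Integrable (fun ω => h ω * Z ω) P :=
    hZ.bdd_mul (hh.mono h𝒢le).aestronglyMeasurable (Eventually.of_forall hhb)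
  have hpull : P[h * Z|𝒢] =ᵐ[P] h * P[Z|𝒢] :=
    condExp_mul_of_stronglyMeasurable_left hh hint hZ
  calc ∫ ω, h ω * Z ω ∂P = ∫ ω, (P[h * Z|𝒢]) ω ∂P := (integral_condExp h𝒢le).symm
    _ = ∫ ω, (h * P[Z|𝒢]) ω ∂P := integral_congr_ae hpull
    _ = ∫ ω, h ω * (P[Z|𝒢]) ω ∂P := rfl

lemma keyA' [StandardBorelSpace Ω] {P : Measure Ω} [IsProbabilityMeasure P]
    (h𝒢le : 𝒢 ≤ mΩ) {Z : Ω → ℝ} (hZm : Measurable[mΩ] Z) (hZint : Integrable Z P)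
    {D : Ω → ℕ} (hD : Measurable[mΩ] D)
    (hCI : CondIndepFun 𝒢 h𝒢le Z D (μ := P)) (d : ℕ) :
    P[fun ω => Z ω * (if D ω = d then (1:ℝ) else 0) | 𝒢]
      =ᵐ[P] fun ω => (P[Z|𝒢]) ω
        * (P[fun ω => (if D ω = d then (1:ℝ) else 0)|𝒢]) ω := by
  have hA : MeasurableSet[mΩ] (D ⁻¹' {d}) := hD (measurableSet_singleton d)
  set A : Set Ω := D ⁻¹' {d} with hA_def
  have hχeq : ∀ ω, (if D ω = d then (1:ℝ) else 0) = A.indicator (fun ω => (1:ℝ)) ω := by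
    intro ω; by_cases h : D ω = d <;> simp [A, Set.indicator_apply, h]
  simp only [hχeq]
  set χ : Ω → ℝ := A.indicator (fun ω => (1:ℝ)) with hχ_def
  have hχm : Measurable[mΩ] χ := measurable_const.indicator hA
  have hχ01 : ∀ ω, 0 ≤ χ ω ∧ χ ω ≤ 1 := fun ω => by
    by_cases h : ω ∈ A <;> simp [χ, Set.indicator_apply, h]
  have hχnorm : ∀ ω, ‖χ ω‖ ≤ 1 := fun ω => by
    rw [Real.norm_eq_abs, abs_le]; exact ⟨by linarith [(hχ01 ω).1], (hχ01 ω).2⟩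
  have hχint : Integrable χ P := bdd_int hχm.aestronglyMeasurable hχnorm
  have hpA0 : 0 ≤ᵐ[P] (P[χ|𝒢]) := condExp_nonneg (Eventually.of_forall fun ω => (hχ01 ω).1)
  have hpA1 : (P[χ|𝒢]) ≤ᵐ[P] fun _ => (1:ℝ) := by
    have hmono := condExp_mono (μ := P) (m := 𝒢) hχint (integrable_const (1:ℝ))
      (Eventually.of_forall fun ω => (hχ01 ω).2)
    rwa [condExp_const h𝒢le] at hmono
  set pA : Ω → ℝ := P[χ|𝒢] with hpA_def
  have hpAsm : StronglyMeasurable[𝒢] pA := stronglyMeasurable_condExp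
  set pA' : Ω → ℝ := fun ω => min (max (pA ω) 0) 1 with hpA'_def
  have hpA'sm : StronglyMeasurable[𝒢] pA' :=
    ((hpAsm.measurable.max measurable_const).min measurable_const).stronglyMeasurable
  have hpA'eq : pA' =ᵐ[P] pA := by
    filter_upwards [hpA0, hpA1] with ω h0 h1
    have h0' : (0:ℝ) ≤ pA ω := h0
    have h1' : pA ω ≤ 1 := h1
    simp only [hpA'_def]
    rw [max_eq_left h0', min_eq_left h1']
  have hpA'01 : ∀ ω, 0 ≤ pA' ω ∧ pA' ω ≤ 1 :=
    fun ω => ⟨le_min (le_max_right _ _) zero_le_one, min_le_right _ _⟩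
  have hZχint : Integrable (fun ω => Z ω * χ ω) P :=
    int_mul_bdd hZint hχm.aestronglyMeasurable (Eventually.of_forall hχnorm)
  have hpAbd : ∀ᵐ ω ∂P, ‖pA ω‖ ≤ 1 := by
    filter_upwards [hpA0, hpA1] with ω h0 h1
    rw [Real.norm_eq_abs, abs_le]
    exact ⟨by linarith [show (0:ℝ) ≤ pA ω from h0], h1⟩
  have hgint : Integrable (fun ω => (P[Z|𝒢]) ω * pA ω) P :=
    int_mul_bdd integrable_condExp (hpAsm.mono h𝒢le).aestronglyMeasurable hpAbd
  have hCIiff := (condIndepFun_iff (m' := 𝒢) (hm' := h𝒢le) (f := Z) (g := D) hZm hD P).mp hCI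
  have hindint : ∀ u : Set Ω, MeasurableSet[mΩ] u →
      Integrable (u.indicator fun ω => (1:ℝ)) P :=
    fun u hu => (integrable_const (1:ℝ)).indicator hu
  refine (ae_eq_condExp_of_forall_setIntegral_eq h𝒢le hZχint
    (fun s hs _ => hgint.integrableOn) ?_
    (stronglyMeasurable_condExp.mul hpAsm).aestronglyMeasurable).symm
  intro s hs _
  have hs' : MeasurableSet[mΩ] s := h𝒢le _ hs
  set χs : Ω → ℝ := s.indicator (fun ω => (1:ℝ)) with hχs_def
  have hχsm𝒢 : StronglyMeasurable[𝒢] χs := stronglyMeasurable_const.indicator hs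
  have hχsm : Measurable[mΩ] χs := measurable_const.indicator hs'
  have hχs01 : ∀ ω, 0 ≤ χs ω ∧ χs ω ≤ 1 := fun ω => by
    by_cases h : ω ∈ s <;> simp [χs, Set.indicator_apply, h]
  have hres : ∀ f : Ω → ℝ, ∫ ω in s, f ω ∂P = ∫ ω, f ω * χs ω ∂P := by
    intro f
    rw [← integral_indicator hs']
    congr 1; funext ω
    by_cases h : ω ∈ s <;> simp [χs, Set.indicator_apply, h]
  have hbnd' : ∀ ω, ‖pA' ω * χs ω‖ ≤ 1 := fun ω => by
    rw [Real.norm_eq_abs, abs_le]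
    constructor
    · nlinarith [(hpA'01 ω).1, (hχs01 ω).1]
    · nlinarith [(hpA'01 ω).1, (hpA'01 ω).2, (hχs01 ω).1, (hχs01 ω).2]
  have hhsm : StronglyMeasurable[𝒢] (fun ω => pA' ω * χs ω) := hpA'sm.mul hχsm𝒢
  have stepA : ∫ ω in s, (P[Z|𝒢]) ω * pA ω ∂P = ∫ ω, (pA' ω * χs ω) * Z ω ∂P := by
    rw [hres]
    have e1 : ∫ ω, ((P[Z|𝒢]) ω * pA ω) * χs ω ∂P
        = ∫ ω, (pA' ω * χs ω) * (P[Z|𝒢]) ω ∂P := by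
      refine integral_congr_ae ?_
      filter_upwards [hpA'eq] with ω hω
      rw [hω]; ring
    rw [e1, ← integral_mul_condexp h𝒢le hhsm hbnd' hZint]
  have hmain : ∀ B : Set ℝ, MeasurableSet B →
      ∫ ω in Z ⁻¹' B, χ ω * χs ω ∂P = ∫ ω in Z ⁻¹' B, pA' ω * χs ω ∂P := by
    intro B hB
    have ht : MeasurableSet[mΩ] (Z ⁻¹' B) := hZm hB
    have hindep := hCIiff (Z ⁻¹' B) A ⟨B, hB, rfl⟩ ⟨{d}, measurableSet_singleton d, rfl⟩
    have hta : MeasurableSet[mΩ] (Z ⁻¹' B ∩ A) := ht.inter hA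
    have e1 : ∫ ω in Z ⁻¹' B, χ ω * χs ω ∂P
        = ∫ ω in s, ((Z ⁻¹' B ∩ A).indicator (fun ω => (1:ℝ))) ω ∂P := by
      rw [← integral_indicator ht, ← integral_indicator hs']
      congr 1; funext ω
      by_cases h1 : ω ∈ Z ⁻¹' B <;> by_cases h2 : ω ∈ A <;> by_cases h3 : ω ∈ s <;>
        simp [χ, χs, Set.indicator_apply, Set.mem_inter_iff, h1, h2, h3]
    have e2 : ∫ ω in s, ((Z ⁻¹' B ∩ A).indicator (fun ω => (1:ℝ))) ω ∂P
        = ∫ ω in s, (P⟦Z ⁻¹' B ∩ A | 𝒢⟧) ω ∂P :=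
      (setIntegral_condExp h𝒢le (hindint _ hta) hs).symm
    have e3 : ∫ ω in s, (P⟦Z ⁻¹' B ∩ A | 𝒢⟧) ω ∂P
        = ∫ ω in s, (P⟦Z ⁻¹' B | 𝒢⟧) ω * pA' ω ∂P := by
      refine integral_congr_ae (ae_restrict_of_ae ?_)
      filter_upwards [hindep, hpA'eq] with ω h1 h2
      rw [h1]
      simp only [Pi.mul_apply]
      rw [h2, hpA_def, hχ_def]
    have e4 : ∫ ω in s, (P⟦Z ⁻¹' B | 𝒢⟧) ω * pA' ω ∂P
        = ∫ ω, (pA' ω * χs ω) * ((Z ⁻¹' B).indicator (fun ω => (1:ℝ))) ω ∂P := by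
      rw [hres]
      rw [integral_mul_condexp h𝒢le hhsm hbnd' (hindint _ ht)]
      exact integral_congr_ae (Eventually.of_forall fun ω => by ring)
    have e5 : ∫ ω, (pA' ω * χs ω) * ((Z ⁻¹' B).indicator (fun ω => (1:ℝ))) ω ∂P
        = ∫ ω in Z ⁻¹' B, pA' ω * χs ω ∂P := by
      rw [← integral_indicator ht]
      congr 1; funext ω
      by_cases h1 : ω ∈ Z ⁻¹' B <;> simp [Set.indicator_apply, h1]
    rw [e1, e2, e3, e4, e5]
  -- the withDensity / pushforward step
  have hint_u : Integrable (fun ω => χ ω * χs ω) P :=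
    int_mul_bdd hχint hχsm.aestronglyMeasurable
      (Eventually.of_forall fun ω => by
        rw [Real.norm_eq_abs, abs_le]
        exact ⟨by linarith [(hχs01 ω).1], (hχs01 ω).2⟩)
  have hint_v : Integrable (fun ω => pA' ω * χs ω) P :=
    bdd_int ((hpA'sm.mono h𝒢le).aestronglyMeasurable.mul hχsm.aestronglyMeasurable) hbnd'
  set u : Ω → ℝ≥0 := (A ∩ s).indicator (fun ω => (1:ℝ≥0)) with hu_def
  have hu : Measurable[mΩ] u := measurable_const.indicator (hA.inter hs')
  have hucoe : ∀ ω, (u ω : ℝ) = χ ω * χs ω := fun ω => by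
    by_cases h1 : ω ∈ A <;> by_cases h2 : ω ∈ s <;>
      simp [u, χ, χs, Set.indicator_apply, Set.mem_inter_iff, h1, h2]
  set v : Ω → ℝ≥0 := fun ω => Real.toNNReal (pA' ω * χs ω) with hv_def
  have hv : Measurable[mΩ] v :=
    (((hpA'sm.mono h𝒢le).measurable).mul hχsm).real_toNNReal
  have hvcoe : ∀ ω, (v ω : ℝ) = pA' ω * χs ω := fun ω =>
    Real.coe_toNNReal _ (mul_nonneg (hpA'01 ω).1 (hχs01 ω).1)
  have hmap : (P.withDensity fun ω => (u ω : ℝ≥0∞)).map Z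
      = (P.withDensity fun ω => (v ω : ℝ≥0∞)).map Z := by
    ext B hB
    rw [Measure.map_apply hZm hB, Measure.map_apply hZm hB,
      withDensity_apply _ (hZm hB), withDensity_apply _ (hZm hB)]
    have hiu : Integrable (fun ω => (u ω : ℝ)) (P.restrict (Z ⁻¹' B)) :=
      (hint_u.congr (Eventually.of_forall fun ω => (hucoe ω).symm)).integrableOn
    have hiv : Integrable (fun ω => (v ω : ℝ)) (P.restrict (Z ⁻¹' B)) :=
      (hint_v.congr (Eventually.of_forall fun ω => (hvcoe ω).symm)).integrableOn
    have h1 : ∫⁻ ω in Z ⁻¹' B, (u ω : ℝ≥0∞) ∂P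
        = ENNReal.ofReal (∫ ω in Z ⁻¹' B, (u ω : ℝ) ∂P) := by
      rw [ofReal_integral_eq_lintegral_ofReal hiu
        (Eventually.of_forall fun ω => (u ω).coe_nonneg)]
      exact lintegral_congr fun ω => ENNReal.ofReal_coe_nnreal.symm
    have h2 : ∫⁻ ω in Z ⁻¹' B, (v ω : ℝ≥0∞) ∂P
        = ENNReal.ofReal (∫ ω in Z ⁻¹' B, (v ω : ℝ) ∂P) := by
      rw [ofReal_integral_eq_lintegral_ofReal hiv
        (Eventually.of_forall fun ω => (v ω).coe_nonneg)]
      exact lintegral_congr fun ω => ENNReal.ofReal_coe_nnreal.symm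
    rw [h1, h2]
    congr 1
    calc ∫ ω in Z ⁻¹' B, (u ω : ℝ) ∂P
        = ∫ ω in Z ⁻¹' B, χ ω * χs ω ∂P :=
          integral_congr_ae (Eventually.of_forall fun ω => hucoe ω)
      _ = ∫ ω in Z ⁻¹' B, pA' ω * χs ω ∂P := hmain B hB
      _ = ∫ ω in Z ⁻¹' B, (v ω : ℝ) ∂P :=
          integral_congr_ae (Eventually.of_forall fun ω => (hvcoe ω).symm)
  have iu : ∫ ω, Z ω ∂(P.withDensity fun ω => (u ω : ℝ≥0∞)) = ∫ ω, (u ω : ℝ) * Z ω ∂P := by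
    rw [integral_withDensity_eq_integral_smul hu]
    exact integral_congr_ae (Eventually.of_forall fun ω => by simp [NNReal.smul_def])
  have iv : ∫ ω, Z ω ∂(P.withDensity fun ω => (v ω : ℝ≥0∞)) = ∫ ω, (v ω : ℝ) * Z ω ∂P := by
    rw [integral_withDensity_eq_integral_smul hv]
    exact integral_congr_ae (Eventually.of_forall fun ω => by simp [NNReal.smul_def])
  have imap_u : ∫ ω, Z ω ∂(P.withDensity fun ω => (u ω : ℝ≥0∞))
      = ∫ x, x ∂((P.withDensity fun ω => (u ω : ℝ≥0∞)).map Z) :=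
    (integral_map hZm.aemeasurable aestronglyMeasurable_id).symm
  have imap_v : ∫ ω, Z ω ∂(P.withDensity fun ω => (v ω : ℝ≥0∞))
      = ∫ x, x ∂((P.withDensity fun ω => (v ω : ℝ≥0∞)).map Z) :=
    (integral_map hZm.aemeasurable aestronglyMeasurable_id).symm
  have stepC : ∫ ω, (χ ω * χs ω) * Z ω ∂P = ∫ ω, (pA' ω * χs ω) * Z ω ∂P := by
    have c1 : ∫ ω, (χ ω * χs ω) * Z ω ∂P = ∫ ω, (u ω : ℝ) * Z ω ∂P :=
      integral_congr_ae (Eventually.of_forall fun ω => by simp only [hucoe])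
    have c2 : ∫ ω, (pA' ω * χs ω) * Z ω ∂P = ∫ ω, (v ω : ℝ) * Z ω ∂P :=
      integral_congr_ae (Eventually.of_forall fun ω => by simp only [hvcoe])
    rw [c1, c2, ← iu, ← iv, imap_u, imap_v, hmap]
  calc ∫ ω in s, (P[Z|𝒢]) ω * pA ω ∂P
      = ∫ ω, (pA' ω * χs ω) * Z ω ∂P := stepA
    _ = ∫ ω, (χ ω * χs ω) * Z ω ∂P := stepC.symm
    _ = ∫ ω in s, Z ω * χ ω ∂P := by
        rw [hres]
        exact integral_congr_ae (Eventually.of_forall fun ω => by ring)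

lemma condIndepFun_ae_left [StandardBorelSpace Ω] {P : Measure Ω} [IsFiniteMeasure P]
    (h𝒢le : 𝒢 ≤ mΩ) {Z Z' : Ω → ℝ} {D : Ω → ℕ}
    (hCI : CondIndepFun 𝒢 h𝒢le Z D (μ := P)) (hZZ' : Z =ᵐ[P] Z') :
    CondIndepFun 𝒢 h𝒢le Z' D (μ := P) := by
  have hnull : P {ω | Z ω ≠ Z' ω} = 0 := by
    rw [Filter.EventuallyEq, ae_iff] at hZZ'; exact hZZ'
  obtain ⟨N, hsub, hNm, hN0⟩ := exists_measurable_superset_of_null hnull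
  have h2 : (P⟦N | 𝒢⟧) =ᵐ[P] 0 := by
    have hind : (Set.indicator N fun ω => (1:ℝ)) =ᵐ[P] 0 := by
      have hae : ∀ᵐ ω ∂P, ω ∉ N := by rw [ae_iff]; simpa using hN0
      filter_upwards [hae] with ω hω
      simp [Set.indicator_of_notMem hω]
    exact (condExp_congr_ae hind).trans (by rw [condExp_zero])
  have h2' : (P⟦N | 𝒢⟧) =ᵐ[P.trim h𝒢le] 0 :=
    StronglyMeasurable.ae_eq_trim_of_stronglyMeasurable h𝒢le stronglyMeasurable_condExp
      stronglyMeasurable_const h2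
  have ha := condExpKernel_ae_eq_trim_condExp (mΩ := mΩ) (m := 𝒢) (μ := P) h𝒢le hNm
  have h4 : ∀ᵐ ω ∂(P.trim h𝒢le), (condExpKernel P 𝒢 ω) N = 0 := by
    filter_upwards [ha.trans h2'] with ω hω
    have hne : (condExpKernel P 𝒢 ω) N ≠ ⊤ := measure_ne_top _ _
    simpa [measureReal_def, ENNReal.toReal_eq_zero_iff, hne] using hω
  refine Kernel.IndepFun.congr' hCI ?_ (Filter.Eventually.of_forall fun a => ?_)
  · filter_upwards [h4] with a ha'
    have hz : (condExpKernel P 𝒢 a) {ω | Z ω ≠ Z' ω} = 0 := measure_mono_null hsub ha'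
    rw [Filter.EventuallyEq, ae_iff]
    exact hz
  · rfl


lemma keyA [StandardBorelSpace Ω] {P : Measure Ω} [IsProbabilityMeasure P]
    (h𝒢le : 𝒢 ≤ mΩ) {Z : Ω → ℝ} (hZint : Integrable Z P)
    {D : Ω → ℕ} (hD : Measurable[mΩ] D)
    (hCI : CondIndepFun 𝒢 h𝒢le Z D (μ := P)) (d : ℕ) :
    P[fun ω => Z ω * (if D ω = d then (1:ℝ) else 0) | 𝒢]
      =ᵐ[P] fun ω => (P[Z|𝒢]) ω
        * (P[fun ω => (if D ω = d then (1:ℝ) else 0)|𝒢]) ω := by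
  obtain ⟨Z', hZ'm, hae⟩ : ∃ Z', StronglyMeasurable[mΩ] Z' ∧ Z =ᵐ[P] Z' :=
    ⟨hZint.1.mk Z, hZint.1.stronglyMeasurable_mk, hZint.1.ae_eq_mk⟩
  have hZ'int : Integrable Z' P := hZint.congr hae
  have hCI' := condIndepFun_ae_left h𝒢le hCI hae
  have h1 := keyA' h𝒢le hZ'm.measurable hZ'int hD hCI' d
  have e1 : P[fun ω => Z ω * (if D ω = d then (1:ℝ) else 0)|𝒢]
      =ᵐ[P] P[fun ω => Z' ω * (if D ω = d then (1:ℝ) else 0)|𝒢] :=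
    condExp_congr_ae (by filter_upwards [hae] with ω hω; rw [hω])
  have e2 : P[Z|𝒢] =ᵐ[P] P[Z'|𝒢] := condExp_congr_ae hae
  refine e1.trans (h1.trans ?_)
  filter_upwards [e2] with ω hω
  rw [← hω]

end Helpers




/-- `E[Z | D = d]`: the conditional mean of `Z` given group membership `D = d`,
i.e. `E[Z · 𝟙{D = d}] / P(D = d)`. -/
noncomputable def condMean {Ω : Type*} {m : MeasurableSpace Ω} (P : Measure Ω)
    (Z : Ω → ℝ) (D : Ω → ℕ) (d : ℕ) : ℝ :=
  (∫ ω, Z ω * (if D ω = d then (1:ℝ) else 0) ∂P) / (P {ω | D ω = d}).toReal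

/-- `p_r`: the propensity score of group `r` (`p₁` if `r = 1`, and `p₀ = 1 - p₁` if `r = 0`). -/
noncomputable def pscore {Ω : Type*} (p₁ : Ω → ℝ) (r : ℕ) (ω : Ω) : ℝ :=
  if r = 1 then p₁ ω else 1 - p₁ ω

lemma stmt11_aux {Ω : Type*} {𝒢 : MeasurableSpace Ω} [mΩ : MeasurableSpace Ω]
    [StandardBorelSpace Ω]
    (P : Measure Ω) [IsProbabilityMeasure P] (h𝒢le : 𝒢 ≤ mΩ)
    (D : Ω → ℕ) (hD : Measurable[mΩ] D) (hD01 : ∀ ω, D ω = 0 ∨ D ω = 1)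
    (Y : ℕ → Ω → ℝ) (hY0int : Integrable (Y 0) P) (hY1int : Integrable (Y 1) P)
    (Yobs : Ω → ℝ)
    (hYobs : ∀ ω, Yobs ω = (D ω : ℝ) * Y 1 ω + (1 - (D ω : ℝ)) * Y 0 ω)
    (p₁ : Ω → ℝ) (hp₁meas : Measurable[𝒢] p₁)
    (hp₁ : p₁ =ᵐ[P] P[fun ω => (D ω : ℝ) | 𝒢])
    (hp₁0 : ∀ ω, 0 ≤ p₁ ω) (hp₁1 : ∀ ω, p₁ ω ≤ 1)
    (hig0 : CondIndepFun 𝒢 h𝒢le (Y 0) D (μ := P))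
    (hig1 : CondIndepFun 𝒢 h𝒢le (Y 1) D (μ := P))
    (Y2 : Ω → ℝ) (hY2 : ∀ ω, Y2 ω = p₁ ω * Y 1 ω + (1 - p₁ ω) * Y 0 ω)
    (g₂ : Ω → ℝ) (hg₂meas : Measurable[𝒢] g₂) (hg₂int : Integrable g₂ P)
    (hg₂ : g₂ =ᵐ[P] P[Yobs | 𝒢])
    (d : ℕ) (q : Ω → ℝ) (hqm : Measurable[𝒢] q) (hq01 : ∀ ω, 0 ≤ q ω ∧ q ω ≤ 1) :
    ∫ ω, (Yobs ω - g₂ ω) * q ω + (if D ω = d then (1:ℝ) else 0) * g₂ ω ∂P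
      = ∫ ω, Y2 ω * (if D ω = d then (1:ℝ) else 0) ∂P := by
  have hq : ∀ ω, ‖q ω‖ ≤ 1 := fun ω => by
    rw [Real.norm_eq_abs, abs_le]; exact ⟨by linarith [(hq01 ω).1], (hq01 ω).2⟩
  have hqsm : StronglyMeasurable[𝒢] q := hqm.stronglyMeasurable
  have hqaesm : AEStronglyMeasurable q P := (hqsm.mono h𝒢le).aestronglyMeasurable
  -- indicators
  have hsetm : ∀ r : ℕ, MeasurableSet[mΩ] (D ⁻¹' {r}) :=
    fun r => hD (measurableSet_singleton r)
  have hIm : ∀ r : ℕ, Measurable[mΩ] (fun ω => if D ω = r then (1:ℝ) else 0) := by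
    intro r
    have he : (fun ω => if D ω = r then (1:ℝ) else 0)
        = (D ⁻¹' {r}).indicator (fun _ => (1:ℝ)) := by
      funext ω; by_cases h : D ω = r <;> simp [Set.indicator_apply, h]
    rw [he]; exact measurable_const.indicator (hsetm r)
  have hI01 : ∀ r : ℕ, ∀ ω, 0 ≤ (if D ω = r then (1:ℝ) else 0)
      ∧ (if D ω = r then (1:ℝ) else 0) ≤ 1 := fun r ω => by
    by_cases h : D ω = r <;> simp [h]
  have hInorm : ∀ r : ℕ, ∀ ω, ‖(if D ω = r then (1:ℝ) else 0)‖ ≤ 1 := fun r ω => by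
    rw [Real.norm_eq_abs, abs_le]
    exact ⟨by linarith [(hI01 r ω).1], (hI01 r ω).2⟩
  have hIint : ∀ r : ℕ, Integrable (fun ω => if D ω = r then (1:ℝ) else 0) P :=
    fun r => bdd_int (hIm r).aestronglyMeasurable (hInorm r)
  have hIaesm : ∀ r : ℕ, AEStronglyMeasurable (fun ω => if D ω = r then (1:ℝ) else 0) P :=
    fun r => (hIm r).aestronglyMeasurable
  -- Yobs decomposition
  have hYobs2 : ∀ ω, Yobs ω = Y 1 ω * (if D ω = 1 then (1:ℝ) else 0)
      + Y 0 ω * (if D ω = 0 then (1:ℝ) else 0) := by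
    intro ω; rcases hD01 ω with h | h <;> simp [hYobs, h]
  have hint1 : Integrable (fun ω => Y 1 ω * (if D ω = 1 then (1:ℝ) else 0)) P :=
    int_mul_bdd hY1int (hIaesm 1) (Filter.Eventually.of_forall (hInorm 1))
  have hint0 : Integrable (fun ω => Y 0 ω * (if D ω = 0 then (1:ℝ) else 0)) P :=
    int_mul_bdd hY0int (hIaesm 0) (Filter.Eventually.of_forall (hInorm 0))
  have hYobsint : Integrable Yobs P :=
    (hint1.add hint0).congr (Filter.Eventually.of_forall fun ω => (hYobs2 ω).symm)
  -- Part 1 : the augmentation term vanishes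
  have hintA : Integrable (fun ω => q ω * Yobs ω) P :=
    hYobsint.bdd_mul hqaesm (Filter.Eventually.of_forall hq)
  have hintB : Integrable (fun ω => q ω * g₂ ω) P :=
    hg₂int.bdd_mul hqaesm (Filter.Eventually.of_forall hq)
  have hpart1 : ∫ ω, (Yobs ω - g₂ ω) * q ω ∂P = 0 := by
    have h1 : ∫ ω, q ω * Yobs ω ∂P = ∫ ω, q ω * (P[Yobs|𝒢]) ω ∂P :=
      integral_mul_condexp h𝒢le hqsm hq hYobsint
    have h2 : ∫ ω, q ω * (P[Yobs|𝒢]) ω ∂P = ∫ ω, q ω * g₂ ω ∂P :=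
      integral_congr_ae (by filter_upwards [hg₂] with ω hω; rw [hω])
    have h3 : ∫ ω, (Yobs ω - g₂ ω) * q ω ∂P
        = ∫ ω, q ω * Yobs ω ∂P - ∫ ω, q ω * g₂ ω ∂P := by
      rw [← integral_sub hintA hintB]
      exact integral_congr_ae (Filter.Eventually.of_forall fun ω => by ring)
    rw [h3, h1, h2, sub_self]
  -- key conditional-independence identities
  have k11 := keyA h𝒢le hY1int hD hig1 1
  have k00 := keyA h𝒢le hY0int hD hig0 0
  have k1d := keyA h𝒢le hY1int hD hig1 d
  have k0d := keyA h𝒢le hY0int hD hig0 d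
  -- g₂ in terms of outcome regressions and propensities
  have ha1 : P[Yobs|𝒢] =ᵐ[P] P[fun ω => Y 1 ω * (if D ω = 1 then (1:ℝ) else 0)
      + Y 0 ω * (if D ω = 0 then (1:ℝ) else 0)|𝒢] :=
    condExp_congr_ae (Filter.Eventually.of_forall hYobs2)
  have ha2 : P[fun ω => Y 1 ω * (if D ω = 1 then (1:ℝ) else 0)
        + Y 0 ω * (if D ω = 0 then (1:ℝ) else 0)|𝒢]
      =ᵐ[P] P[fun ω => Y 1 ω * (if D ω = 1 then (1:ℝ) else 0)|𝒢]
        + P[fun ω => Y 0 ω * (if D ω = 0 then (1:ℝ) else 0)|𝒢] :=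
    condExp_add hint1 hint0 𝒢
  have hg₂eq : g₂ =ᵐ[P] fun ω =>
      (P[Y 1|𝒢]) ω * (P[fun ω => (if D ω = 1 then (1:ℝ) else 0)|𝒢]) ω
      + (P[Y 0|𝒢]) ω * (P[fun ω => (if D ω = 0 then (1:ℝ) else 0)|𝒢]) ω :=
    hg₂.trans (ha1.trans (ha2.trans (k11.add k00)))
  -- p₁ is the conditional indicator expectation
  have hDcast : (fun ω => (D ω : ℝ)) = fun ω => (if D ω = 1 then (1:ℝ) else 0) := by
    funext ω; rcases hD01 ω with h | h <;> simp [h]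
  have hp₁e : p₁ =ᵐ[P] P[fun ω => (if D ω = 1 then (1:ℝ) else 0)|𝒢] := by
    refine hp₁.trans ?_
    rw [hDcast]
  have hp0e : P[fun ω => (if D ω = 0 then (1:ℝ) else 0)|𝒢]
      =ᵐ[P] fun ω => 1 - (P[fun ω => (if D ω = 1 then (1:ℝ) else 0)|𝒢]) ω := by
    have hsum : (fun ω => (if D ω = 0 then (1:ℝ) else 0))
        = fun ω => 1 - (if D ω = 1 then (1:ℝ) else 0) := by
      funext ω; rcases hD01 ω with h | h <;> simp [h]
    have hc : P[fun ω => (1:ℝ) - (if D ω = 1 then (1:ℝ) else 0)|𝒢]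
        =ᵐ[P] P[(fun _ => (1:ℝ))|𝒢] - P[fun ω => (if D ω = 1 then (1:ℝ) else 0)|𝒢] :=
      condExp_sub (integrable_const (1:ℝ)) (hIint 1) 𝒢
    rw [hsum]
    refine hc.trans ?_
    rw [condExp_const h𝒢le]
    exact Filter.EventuallyEq.rfl
  -- bounds for pd
  have hpd0 : 0 ≤ᵐ[P] (P[fun ω => (if D ω = d then (1:ℝ) else 0)|𝒢]) :=
    condExp_nonneg (Filter.Eventually.of_forall fun ω => (hI01 d ω).1)
  have hpd1 : (P[fun ω => (if D ω = d then (1:ℝ) else 0)|𝒢]) ≤ᵐ[P] fun _ => (1:ℝ) := by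
    have hmono := condExp_mono (μ := P) (m := 𝒢) (hIint d) (integrable_const (1:ℝ))
      (Filter.Eventually.of_forall fun ω => (hI01 d ω).2)
    rwa [condExp_const h𝒢le] at hmono
  have hpdnorm : ∀ᵐ ω ∂P, ‖(P[fun ω => (if D ω = d then (1:ℝ) else 0)|𝒢]) ω‖ ≤ 1 := by
    filter_upwards [hpd0, hpd1] with ω h0 h1
    rw [Real.norm_eq_abs, abs_le]
    exact ⟨by linarith [show (0:ℝ) ≤ _ from h0], h1⟩
  have hpdaesm : AEStronglyMeasurable
      (P[fun ω => (if D ω = d then (1:ℝ) else 0)|𝒢]) P :=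
    (stronglyMeasurable_condExp.mono h𝒢le).aestronglyMeasurable
  -- Part 2, LHS : ∫ 1_{D=d}·g₂
  have hg₂sm : StronglyMeasurable[𝒢] g₂ := hg₂meas.stronglyMeasurable
  have hg₂Id : Integrable (fun ω => g₂ ω * (if D ω = d then (1:ℝ) else 0)) P :=
    int_mul_bdd hg₂int (hIaesm d) (Filter.Eventually.of_forall (hInorm d))
  have hpull : P[g₂ * (fun ω => if D ω = d then (1:ℝ) else 0)|𝒢]
      =ᵐ[P] g₂ * P[fun ω => (if D ω = d then (1:ℝ) else 0)|𝒢] :=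
    condExp_mul_of_stronglyMeasurable_left hg₂sm hg₂Id (hIint d)
  have hL1 : ∫ ω, (if D ω = d then (1:ℝ) else 0) * g₂ ω ∂P
      = ∫ ω, g₂ ω * (P[fun ω => (if D ω = d then (1:ℝ) else 0)|𝒢]) ω ∂P := by
    calc ∫ ω, (if D ω = d then (1:ℝ) else 0) * g₂ ω ∂P
        = ∫ ω, (g₂ * fun ω => (if D ω = d then (1:ℝ) else 0)) ω ∂P :=
          integral_congr_ae (Filter.Eventually.of_forall fun ω => by
            simp [Pi.mul_apply, mul_comm])
      _ = ∫ ω, (P[g₂ * (fun ω => if D ω = d then (1:ℝ) else 0)|𝒢]) ω ∂P :=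
          (integral_condExp h𝒢le).symm
      _ = ∫ ω, g₂ ω * (P[fun ω => (if D ω = d then (1:ℝ) else 0)|𝒢]) ω ∂P :=
          integral_congr_ae (by filter_upwards [hpull] with ω hω; rw [hω]; rfl)
  have hL2 : ∫ ω, g₂ ω * (P[fun ω => (if D ω = d then (1:ℝ) else 0)|𝒢]) ω ∂P
      = ∫ ω, (p₁ ω * (P[Y 1|𝒢]) ω + (1 - p₁ ω) * (P[Y 0|𝒢]) ω)
          * (P[fun ω => (if D ω = d then (1:ℝ) else 0)|𝒢]) ω ∂P := by
    refine integral_congr_ae ?_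
    filter_upwards [hg₂eq, hp₁e, hp0e] with ω h2 hp1 hp0
    rw [h2, hp0, ← hp1]
    ring
  -- Part 2, RHS : ∫ Y2·1_{D=d}
  have hY1d : Integrable (fun ω => Y 1 ω * (if D ω = d then (1:ℝ) else 0)) P :=
    int_mul_bdd hY1int (hIaesm d) (Filter.Eventually.of_forall (hInorm d))
  have hY0d : Integrable (fun ω => Y 0 ω * (if D ω = d then (1:ℝ) else 0)) P :=
    int_mul_bdd hY0int (hIaesm d) (Filter.Eventually.of_forall (hInorm d))
  have hp₁sm : StronglyMeasurable[𝒢] p₁ := hp₁meas.stronglyMeasurable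
  have hp₁aesm : AEStronglyMeasurable p₁ P := (hp₁sm.mono h𝒢le).aestronglyMeasurable
  have hp₁norm : ∀ ω, ‖p₁ ω‖ ≤ 1 := fun ω => by
    rw [Real.norm_eq_abs, abs_le]; exact ⟨by linarith [hp₁0 ω], hp₁1 ω⟩
  have hq₁sm : StronglyMeasurable[𝒢] (fun ω => 1 - p₁ ω) :=
    stronglyMeasurable_const.sub hp₁sm
  have hq₁norm : ∀ ω, ‖1 - p₁ ω‖ ≤ 1 := fun ω => by
    rw [Real.norm_eq_abs, abs_le]
    constructor <;> [linarith [hp₁1 ω]; linarith [hp₁0 ω]]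
  have hintR1 : Integrable (fun ω => p₁ ω * (Y 1 ω * (if D ω = d then (1:ℝ) else 0))) P :=
    hY1d.bdd_mul hp₁aesm (Filter.Eventually.of_forall hp₁norm)
  have hintR0 : Integrable (fun ω => (1 - p₁ ω) * (Y 0 ω * (if D ω = d then (1:ℝ) else 0))) P :=
    hY0d.bdd_mul ((hq₁sm.mono h𝒢le).aestronglyMeasurable)
      (Filter.Eventually.of_forall hq₁norm)
  have hR1 : ∫ ω, Y2 ω * (if D ω = d then (1:ℝ) else 0) ∂P
      = ∫ ω, p₁ ω * (Y 1 ω * (if D ω = d then (1:ℝ) else 0)) ∂P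
        + ∫ ω, (1 - p₁ ω) * (Y 0 ω * (if D ω = d then (1:ℝ) else 0)) ∂P := by
    rw [← integral_add hintR1 hintR0]
    exact integral_congr_ae (Filter.Eventually.of_forall fun ω => by simp only [hY2]; ring)
  have hR2 : ∫ ω, p₁ ω * (Y 1 ω * (if D ω = d then (1:ℝ) else 0)) ∂P
      = ∫ ω, p₁ ω * ((P[Y 1|𝒢]) ω
          * (P[fun ω => (if D ω = d then (1:ℝ) else 0)|𝒢]) ω) ∂P := by
    rw [integral_mul_condexp h𝒢le hp₁sm hp₁norm hY1d]
    exact integral_congr_ae (by filter_upwards [k1d] with ω hω; rw [hω])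
  have hR0 : ∫ ω, (1 - p₁ ω) * (Y 0 ω * (if D ω = d then (1:ℝ) else 0)) ∂P
      = ∫ ω, (1 - p₁ ω) * ((P[Y 0|𝒢]) ω
          * (P[fun ω => (if D ω = d then (1:ℝ) else 0)|𝒢]) ω) ∂P := by
    rw [integral_mul_condexp h𝒢le hq₁sm hq₁norm hY0d]
    exact integral_congr_ae (by filter_upwards [k0d] with ω hω; rw [hω])
  have hm1pd : Integrable (fun ω => (P[Y 1|𝒢]) ω
      * (P[fun ω => (if D ω = d then (1:ℝ) else 0)|𝒢]) ω) P :=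
    int_mul_bdd integrable_condExp hpdaesm hpdnorm
  have hm0pd : Integrable (fun ω => (P[Y 0|𝒢]) ω
      * (P[fun ω => (if D ω = d then (1:ℝ) else 0)|𝒢]) ω) P :=
    int_mul_bdd integrable_condExp hpdaesm hpdnorm
  have hR3 : ∫ ω, p₁ ω * ((P[Y 1|𝒢]) ω
          * (P[fun ω => (if D ω = d then (1:ℝ) else 0)|𝒢]) ω) ∂P
      + ∫ ω, (1 - p₁ ω) * ((P[Y 0|𝒢]) ω
          * (P[fun ω => (if D ω = d then (1:ℝ) else 0)|𝒢]) ω) ∂P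
      = ∫ ω, (p₁ ω * (P[Y 1|𝒢]) ω + (1 - p₁ ω) * (P[Y 0|𝒢]) ω)
          * (P[fun ω => (if D ω = d then (1:ℝ) else 0)|𝒢]) ω ∂P := by
    rw [← integral_add
      (hm1pd.bdd_mul hp₁aesm (Filter.Eventually.of_forall hp₁norm))
      (hm0pd.bdd_mul ((hq₁sm.mono h𝒢le).aestronglyMeasurable)
        (Filter.Eventually.of_forall hq₁norm))]
    exact integral_congr_ae (Filter.Eventually.of_forall fun ω => by ring)
  -- assemble
  have hIg₂ : Integrable (fun ω => (if D ω = d then (1:ℝ) else 0) * g₂ ω) P :=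
    hg₂int.bdd_mul (hIaesm d) (Filter.Eventually.of_forall (hInorm d))
  have hsub : Integrable (fun ω => (Yobs ω - g₂ ω) * q ω) P :=
    int_mul_bdd (hYobsint.sub hg₂int) hqaesm (Filter.Eventually.of_forall hq)
  calc ∫ ω, (Yobs ω - g₂ ω) * q ω + (if D ω = d then (1:ℝ) else 0) * g₂ ω ∂P
      = (∫ ω, (Yobs ω - g₂ ω) * q ω ∂P)
        + ∫ ω, (if D ω = d then (1:ℝ) else 0) * g₂ ω ∂P := integral_add hsub hIg₂
    _ = ∫ ω, (if D ω = d then (1:ℝ) else 0) * g₂ ω ∂P := by rw [hpart1, zero_add]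
    _ = ∫ ω, (p₁ ω * (P[Y 1|𝒢]) ω + (1 - p₁ ω) * (P[Y 0|𝒢]) ω)
          * (P[fun ω => (if D ω = d then (1:ℝ) else 0)|𝒢]) ω ∂P := by
        rw [hL1, hL2]
    _ = ∫ ω, Y2 ω * (if D ω = d then (1:ℝ) else 0) ∂P := by
        rw [hR1, hR2, hR0, hR3]

/-- double robustness of the equilibrium-reference AIPW formula against
propensity misspecification: for every `d ∈ {0,1}` and EVERY `𝒢`-measurable `q : Ω → [0,1]`,
the AIPW formula recovers `E[Y(2)·𝟙{D = d}]`, provided the pooled outcome regression `g₂`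
is the true one. -/
theorem stmt_11
    {Ω 𝒳 : Type*} (𝒢 : MeasurableSpace Ω) [mΩ : MeasurableSpace Ω] [StandardBorelSpace Ω]
    [MeasurableSpace 𝒳]
    (P : Measure Ω) [IsProbabilityMeasure P]
    (X : Ω → 𝒳) (hX : Measurable X)
    (h𝒢 : 𝒢 = MeasurableSpace.comap X inferInstance)
    (h𝒢le : 𝒢 ≤ mΩ)
    (D : Ω → ℕ) (hD : Measurable D) (hD01 : ∀ ω, D ω = 0 ∨ D ω = 1)
    (hD1pos : 0 < P {ω | D ω = 1}) (hD1lt : P {ω | D ω = 1} < 1)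
    (Y : ℕ → Ω → ℝ) (hY0int : Integrable (Y 0) P) (hY1int : Integrable (Y 1) P)
    (Yobs : Ω → ℝ)
    (hYobs : ∀ ω, Yobs ω = (D ω : ℝ) * Y 1 ω + (1 - (D ω : ℝ)) * Y 0 ω)
    (p₁ : Ω → ℝ) (hp₁meas : Measurable[𝒢] p₁)
    (hp₁ : p₁ =ᵐ[P] P[fun ω => (D ω : ℝ) | 𝒢])
    (hp₁0 : ∀ ω, 0 ≤ p₁ ω) (hp₁1 : ∀ ω, p₁ ω ≤ 1)
    (hig0 : CondIndepFun 𝒢 h𝒢le (Y 0) D (μ := P))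
    (hig1 : CondIndepFun 𝒢 h𝒢le (Y 1) D (μ := P))
    (Y2 : Ω → ℝ) (hY2 : ∀ ω, Y2 ω = p₁ ω * Y 1 ω + (1 - p₁ ω) * Y 0 ω)
    (g₂ : Ω → ℝ) (hg₂meas : Measurable[𝒢] g₂) (hg₂int : Integrable g₂ P)
    (hg₂ : g₂ =ᵐ[P] P[Yobs | 𝒢]) :
    ∀ d : ℕ, d = 0 ∨ d = 1 →
      ∀ q : Ω → ℝ, Measurable[𝒢] q → (∀ ω, 0 ≤ q ω ∧ q ω ≤ 1) →
        ∫ ω, (Yobs ω - g₂ ω) * q ω + (if D ω = d then (1:ℝ) else 0) * g₂ ω ∂P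
          = ∫ ω, Y2 ω * (if D ω = d then (1:ℝ) else 0) ∂P := by
  intro d _hd q hqm hq01
  exact stmt11_aux (𝒢 := 𝒢) (mΩ := mΩ) P h𝒢le D hD hD01 Y hY0int hY1int Yobs hYobs
    p₁ hp₁meas hp₁ hp₁0 hp₁1 hig0 hig1 Y2 hY2 g₂ hg₂meas hg₂int hg₂ d q hqm hq01
end

section
/- (Moment/identification condition for the equilibrium-reference score ψ₂.) Assume ignorability for Y(0) and ignorability for Y(1). Let κ = 1/P(D = 1) + 1/P(D = 0) and let δ₂ = Δ_S^{2,1} − Δ_S^{2,0} be the total unexplained part under the equilibrium reference. Then δ₂ = κ·E[(Y^obs − g₂)·(D − p₁)]; equivalently, the score ψ₂(W; θ, (g, p)) = κ·(Y^obs − g)·(D − p) − θ satisfies E[ψ₂(W; δ₂, (g₂, p₁))] = 0. -/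
open MeasureTheory ProbabilityTheory

section AuxStmt12

variable {Ω : Type*} {𝒢 : MeasurableSpace Ω} {mΩ : MeasurableSpace Ω}
  {μ : Measure Ω} [IsProbabilityMeasure μ]

lemma aux_int_bdd {f : Ω → ℝ} (hf : Measurable f) {C : ℝ}
    (h : ∀ ω, |f ω| ≤ C) : Integrable f μ :=
  Integrable.mono' (integrable_const C) hf.aestronglyMeasurable
    (Filter.Eventually.of_forall fun ω => by simpa [Real.norm_eq_abs] using h ω)

lemma aux_pull {m : MeasurableSpace Ω} (hm : m ≤ mΩ)
    {w g : Ω → ℝ} (hw : StronglyMeasurable[m] w) (hg : Integrable g μ)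
    (hwg : Integrable (w * g) μ) :
    ∫ ω, w ω * g ω ∂μ = ∫ ω, w ω * (μ[g|m]) ω ∂μ := by
  have h := condExp_mul_of_stronglyMeasurable_left hw hwg hg
  calc ∫ ω, w ω * g ω ∂μ = ∫ ω, (w * g) ω ∂μ := rfl
    _ = ∫ ω, (μ[w * g|m]) ω ∂μ := (integral_condExp hm).symm
    _ = ∫ ω, w ω * (μ[g|m]) ω ∂μ := integral_congr_ae h

variable [StandardBorelSpace Ω]

/-- Key: the propensity score is also a version of `E[D | 𝒢 ⊔ σ(Y')]` when `Y' ⟂ D | 𝒢`. -/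
lemma aux_condexp_sup (h𝒢le : 𝒢 ≤ mΩ)
    {D : Ω → ℕ} (hD : Measurable[mΩ] D) (hD01 : ∀ ω, D ω = 0 ∨ D ω = 1)
    {p₁ : Ω → ℝ} (hp₁meas : Measurable[𝒢] p₁)
    (hp₁ : p₁ =ᵐ[μ] μ[fun ω => (D ω : ℝ) | 𝒢])
    (hp₁0 : ∀ ω, 0 ≤ p₁ ω) (hp₁1 : ∀ ω, p₁ ω ≤ 1)
    {Y' : Ω → ℝ} (hY' : Measurable Y')
    (hci : CondIndepFun 𝒢 h𝒢le Y' D μ) :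
    p₁ =ᵐ[μ] μ[fun ω => (D ω : ℝ) | 𝒢 ⊔ MeasurableSpace.comap Y' inferInstance] := by
  set I : Ω → ℝ := fun ω => (D ω : ℝ) with hI
  have hDm : Measurable[mΩ] D := hD
  have hIbd : ∀ ω, |I ω| ≤ 1 := by
    intro ω; rcases hD01 ω with h | h <;> simp [hI, h]
  have hIm : Measurable[mΩ] I := measurable_from_top.comp hDm
  have hIint : Integrable I μ := aux_int_bdd hIm hIbd
  have hp₁m : Measurable[mΩ] p₁ := hp₁meas.mono h𝒢le le_rfl
  have hp₁bd : ∀ ω, |p₁ ω| ≤ 1 := fun ω => abs_le.2 ⟨by linarith [hp₁0 ω], hp₁1 ω⟩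
  have hp₁int : Integrable p₁ μ := aux_int_bdd hp₁m hp₁bd
  have hσYle : MeasurableSpace.comap Y' inferInstance ≤ mΩ := hY'.comap_le
  have hℋle : 𝒢 ⊔ MeasurableSpace.comap Y' inferInstance ≤ mΩ := sup_le h𝒢le hσYle
  have hindA : Set.indicator (D ⁻¹' {1}) (fun _ => (1:ℝ)) = I := by
    funext ω
    rcases hD01 ω with h | h <;> simp [Set.indicator, hI, h]
  have hq : μ[Set.indicator (D ⁻¹' {1}) (fun _ => (1:ℝ)) | 𝒢] =ᵐ[μ] p₁ := by
    rw [hindA]; exact hp₁.symm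
  have htot : ∫ ω, p₁ ω ∂μ = ∫ ω, I ω ∂μ := by
    rw [← integral_condExp (μ := μ) (f := I) h𝒢le]
    exact integral_congr_ae hp₁
  set piC : Set (Set Ω) :=
    {u | ∃ G S, MeasurableSet[𝒢] G ∧ MeasurableSet[MeasurableSpace.comap Y' inferInstance] S ∧ u = G ∩ S} with hpiC
  have h_eq : 𝒢 ⊔ MeasurableSpace.comap Y' inferInstance = MeasurableSpace.generateFrom piC := by
    apply le_antisymm
    · refine sup_le ?_ ?_
      · intro G hG
        exact MeasurableSpace.measurableSet_generateFrom
          ⟨G, Set.univ, hG, MeasurableSet.univ, by simp⟩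
      · intro S hS
        exact MeasurableSpace.measurableSet_generateFrom
          ⟨Set.univ, S, MeasurableSet.univ, hS, by simp⟩
    · refine MeasurableSpace.generateFrom_le ?_
      rintro u ⟨G, S, hG, hS, rfl⟩
      exact (MeasurableSet.inter (le_sup_left (a := 𝒢) (b := MeasurableSpace.comap Y' inferInstance) G hG)
        (le_sup_right (a := 𝒢) (b := MeasurableSpace.comap Y' inferInstance) S hS))
  have h_pi : IsPiSystem piC := by
    rintro u ⟨G, S, hG, hS, rfl⟩ v ⟨G', S', hG', hS', rfl⟩ -
    exact ⟨G ∩ G', S ∩ S', hG.inter hG', hS.inter hS', by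
      rw [Set.inter_inter_inter_comm]⟩
  have hmain : ∀ t, MeasurableSet[𝒢 ⊔ MeasurableSpace.comap Y' inferInstance] t → ∫ ω in t, p₁ ω ∂μ = ∫ ω in t, I ω ∂μ := by
    have hstep := MeasurableSpace.induction_on_inter (m := 𝒢 ⊔ MeasurableSpace.comap Y' inferInstance)
      (C := fun t _ => ∫ ω in t, p₁ ω ∂μ = ∫ ω in t, I ω ∂μ) (s := piC) h_eq h_pi
    refine fun t ht => hstep ?_ ?_ ?_ ?_ t ht
    · simp
    · -- basic case
      rintro u ⟨G, S, hG, hS, rfl⟩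
      obtain ⟨s, hs, rfl⟩ := hS
      have hGm : MeasurableSet[mΩ] G := h𝒢le G hG
      have hSm : MeasurableSet[mΩ] (Y' ⁻¹' s) := hY' hs
      set cG : Ω → ℝ := Set.indicator G (fun _ => (1:ℝ)) with hcG
      set cS : Ω → ℝ := Set.indicator (Y' ⁻¹' s) (fun _ => (1:ℝ)) with hcS
      have hcGbd : ∀ ω, |cG ω| ≤ 1 := fun ω => by
        by_cases h : ω ∈ G <;> simp [hcG, Set.indicator, h]
      have hcSbd : ∀ ω, |cS ω| ≤ 1 := fun ω => by
        by_cases h : ω ∈ Y' ⁻¹' s <;> simp [hcS, Set.indicator, h]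
      have hcG𝒢 : Measurable[𝒢] cG := Measurable.indicator measurable_const hG
      have hcGm : Measurable[mΩ] cG := hcG𝒢.mono h𝒢le le_rfl
      have hcSm : Measurable[mΩ] cS := Measurable.indicator measurable_const hSm
      have hcSint : Integrable cS μ := aux_int_bdd hcSm hcSbd
      have hsplit : ∀ (h : Ω → ℝ), ∫ ω in G ∩ Y' ⁻¹' s, h ω ∂μ
          = ∫ ω, cG ω * cS ω * h ω ∂μ := by
        intro h
        rw [← integral_indicator (hGm.inter hSm)]
        refine integral_congr_ae (Filter.Eventually.of_forall fun ω => ?_)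
        by_cases h1 : ω ∈ G <;> by_cases h2 : ω ∈ Y' ⁻¹' s <;>
          simp [Set.indicator, h1, h2, hcG, hcS]
      rw [hsplit p₁, hsplit I]
      have hprod := (condIndepFun_iff_condExp_inter_preimage_eq_mul
        (m' := 𝒢) (hm' := h𝒢le) (μ := μ) hY' hDm).mp hci s {1} hs (measurableSet_singleton 1)
      have hLw : StronglyMeasurable[𝒢] (fun ω => cG ω * p₁ ω) :=
        (hcG𝒢.mul hp₁meas).stronglyMeasurable
      have hLint : Integrable ((fun ω => cG ω * p₁ ω) * cS) μ := by
        refine aux_int_bdd ((hcGm.mul hp₁m).mul hcSm) (C := 1) fun ω => ?_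
        simp only [Pi.mul_apply, abs_mul]
        calc |cG ω| * |p₁ ω| * |cS ω| ≤ 1 * 1 * 1 := by
              gcongr <;> [exact hcGbd ω; exact hp₁bd ω; exact hcSbd ω]
          _ = 1 := by ring
      have hL : ∫ ω, cG ω * cS ω * p₁ ω ∂μ
          = ∫ ω, (cG ω * p₁ ω) * (μ[cS|𝒢]) ω ∂μ := by
        rw [← aux_pull h𝒢le hLw hcSint hLint]
        refine integral_congr_ae (Filter.Eventually.of_forall fun ω => ?_); ring
      have hRg : Integrable (fun ω => cS ω * I ω) μ := by
        refine aux_int_bdd (hcSm.mul hIm) (C := 1) fun ω => ?_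
        rw [abs_mul]
        calc |cS ω| * |I ω| ≤ 1 * 1 := by gcongr; exacts [hcSbd ω, hIbd ω]
          _ = 1 := by ring
      have hcSI : (fun ω => cS ω * I ω)
          = Set.indicator (Y' ⁻¹' s ∩ D ⁻¹' {1}) (fun _ => (1:ℝ)) := by
        funext ω
        have hIv1 : ∀ ω', ω' ∈ D ⁻¹' {1} → I ω' = 1 := by
          intro ω' h'
          have : D ω' = 1 := h'
          simp [hI, this]
        have hIv0 : ∀ ω', ω' ∉ D ⁻¹' {1} → I ω' = 0 := by
          intro ω' h'
          rcases hD01 ω' with h3 | h3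
          · simp [hI, h3]
          · exact absurd (by simpa [Set.mem_preimage] using h3) h'
        by_cases h1 : ω ∈ Y' ⁻¹' s <;> by_cases h2 : ω ∈ D ⁻¹' {1} <;>
          simp [hcS, Set.indicator_of_mem, Set.indicator_of_notMem, h1, h2,
            Set.mem_inter_iff, hIv1 ω, hIv0 ω]
      have hRw : StronglyMeasurable[𝒢] cG := hcG𝒢.stronglyMeasurable
      have hRint : Integrable (cG * fun ω => cS ω * I ω) μ := by
        refine aux_int_bdd (hcGm.mul (hcSm.mul hIm)) (C := 1) fun ω => ?_
        simp only [Pi.mul_apply, abs_mul]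
        calc |cG ω| * (|cS ω| * |I ω|) ≤ 1 * (1 * 1) := by
              gcongr <;> [exact hcGbd ω; exact hcSbd ω; exact hIbd ω]
          _ = 1 := by ring
      have hR : ∫ ω, cG ω * cS ω * I ω ∂μ
          = ∫ ω, cG ω * ((μ[cS|𝒢]) ω * p₁ ω) ∂μ := by
        have h1 : ∫ ω, cG ω * cS ω * I ω ∂μ
            = ∫ ω, cG ω * (μ[fun ω => cS ω * I ω|𝒢]) ω ∂μ := by
          rw [← aux_pull h𝒢le hRw hRg hRint]
          refine integral_congr_ae (Filter.Eventually.of_forall fun ω => ?_); ring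
        rw [h1]
        refine integral_congr_ae ?_
        have h2 : μ[fun ω => cS ω * I ω|𝒢]
            =ᵐ[μ] fun ω => (μ[cS|𝒢]) ω * p₁ ω := by
          rw [hcSI]
          exact hprod.trans (by
            filter_upwards [hq] with ω hω
            rw [hω])
        filter_upwards [h2] with ω hω
        rw [hω]
      rw [hL, hR]
      refine integral_congr_ae (Filter.Eventually.of_forall fun ω => ?_); ring
    · -- complement
      intro t ht h
      have htm : MeasurableSet[mΩ] t := hℋle t ht
      have h1 := integral_add_compl htm hp₁int
      have h2 := integral_add_compl htm hIint
      rw [htot] at h1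
      linarith [h1, h2, h]
    · -- disjoint union
      intro f hdisj hmeas hind
      have hm' : ∀ i, MeasurableSet[mΩ] (f i) := fun i => hℋle _ (hmeas i)
      rw [integral_iUnion hm' hdisj hp₁int.integrableOn,
        integral_iUnion hm' hdisj hIint.integrableOn]
      exact tsum_congr hind
  exact ae_eq_condExp_of_forall_setIntegral_eq hℋle hIint
    (fun s _ _ => hp₁int.integrableOn)
    (fun s hs _ => hmain s hs)
    (StronglyMeasurable.aestronglyMeasurable
      ((hp₁meas.mono (le_sup_left : 𝒢 ≤ 𝒢 ⊔ MeasurableSpace.comap Y' inferInstance) le_rfl).stronglyMeasurable))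

lemma aux_core (h𝒢le : 𝒢 ≤ mΩ)
    {D : Ω → ℕ} (hD : Measurable[mΩ] D) (hD01 : ∀ ω, D ω = 0 ∨ D ω = 1)
    {p₁ : Ω → ℝ} (hp₁meas : Measurable[𝒢] p₁)
    (hp₁ : p₁ =ᵐ[μ] μ[fun ω => (D ω : ℝ) | 𝒢])
    (hp₁0 : ∀ ω, 0 ≤ p₁ ω) (hp₁1 : ∀ ω, p₁ ω ≤ 1)
    {Y₀ : Ω → ℝ} (hYint : Integrable Y₀ μ)
    (hci : CondIndepFun 𝒢 h𝒢le Y₀ D μ)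
    {w : Ω → ℝ} (hw : Measurable[𝒢] w) (hwbd : ∀ ω, |w ω| ≤ 1) :
    ∫ ω, w ω * Y₀ ω * (D ω : ℝ) ∂μ = ∫ ω, w ω * Y₀ ω * p₁ ω ∂μ := by
  have hDm : Measurable[mΩ] D := hD
  set I : Ω → ℝ := fun ω => (D ω : ℝ) with hI
  have hIbd : ∀ ω, |I ω| ≤ 1 := by
    intro ω; rcases hD01 ω with h | h <;> simp [hI, h]
  have hIm : Measurable[mΩ] I := measurable_from_top.comp hDm
  have hIint : Integrable I μ := aux_int_bdd hIm hIbd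
  -- measurable version of Y₀
  set Y' : Ω → ℝ := hYint.1.mk Y₀ with hY'def
  have hY'sm : StronglyMeasurable Y' := hYint.1.stronglyMeasurable_mk
  have hY' : Measurable[mΩ] Y' := hY'sm.measurable
  have hae : Y₀ =ᵐ[μ] Y' := hYint.1.ae_eq_mk
  have hY'int : Integrable Y' μ := hYint.congr hae
  -- transfer conditional independence to Y'
  obtain ⟨N, hNsub, hNm, hNnull⟩ :=
    exists_measurable_superset_of_null (ae_iff.mp hae)
  have hker : ∀ᵐ ω ∂μ, condExpKernel μ 𝒢 ω N = 0 := by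
    have h1 : (fun ω => (condExpKernel μ 𝒢 ω N).toReal) =ᵐ[μ] μ⟦N|𝒢⟧ :=
      condExpKernel_ae_eq_condExp h𝒢le hNm
    have h0 : Set.indicator N (fun _ => (1:ℝ)) =ᵐ[μ] 0 := by
      filter_upwards [measure_eq_zero_iff_ae_notMem.mp hNnull] with ω hω
      simp [Set.indicator_of_notMem hω]
    have h2 : μ⟦N|𝒢⟧ =ᵐ[μ] 0 := by
      calc μ⟦N|𝒢⟧ =ᵐ[μ] μ[(0 : Ω → ℝ)|𝒢] := condExp_congr_ae h0
        _ = 0 := condExp_zero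
    filter_upwards [h1, h2] with ω hω1 hω2
    have h3 : (condExpKernel μ 𝒢 ω N).toReal = 0 := by
      rw [hω1]; exact hω2
    have h4 : condExpKernel μ 𝒢 ω N ≠ ⊤ := measure_ne_top _ _
    exact (ENNReal.toReal_eq_zero_iff _).mp h3 |>.resolve_right h4
  have hkerTrim : ∀ᵐ ω ∂(μ.trim h𝒢le), condExpKernel μ 𝒢 ω N = 0 := by
    have hBmeas : MeasurableSet[𝒢] {ω | condExpKernel μ 𝒢 ω N = 0} :=
      measurable_condExpKernel hNm (measurableSet_singleton 0)
    rw [Filter.eventually_iff, mem_ae_iff]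
    have hc : {ω | condExpKernel μ 𝒢 ω N = 0}ᶜ = {ω | ¬ condExpKernel μ 𝒢 ω N = 0} := by
      ext ω; simp
    rw [trim_measurableSet_eq h𝒢le hBmeas.compl, hc]
    exact ae_iff.mp hker
  have hciY' : CondIndepFun 𝒢 h𝒢le Y' D μ := by
    refine Kernel.IndepFun.congr' hci ?_ ?_
    · filter_upwards [hkerTrim] with ω hω
      refine Filter.eventuallyEq_iff_exists_mem.mpr ⟨{x | Y₀ x = Y' x}, ?_, fun x hx => hx⟩
      rw [mem_ae_iff]
      refine measure_mono_null ?_ hω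
      intro x hx
      exact hNsub hx
    · exact Filter.Eventually.of_forall (fun ω => Filter.EventuallyEq.rfl)
  have hC := aux_condexp_sup h𝒢le hD hD01 hp₁meas hp₁ hp₁0 hp₁1 hY' hciY'
  -- the sup σ-algebra
  have hℋle : 𝒢 ⊔ MeasurableSpace.comap Y' inferInstance ≤ mΩ :=
    sup_le h𝒢le hY'.comap_le
  set u : Ω → ℝ := fun ω => w ω * Y' ω with hu_def
  have hY'ℋ : Measurable[𝒢 ⊔ MeasurableSpace.comap Y' inferInstance] Y' :=
    Measurable.mono (measurable_iff_comap_le.mpr le_rfl) le_sup_right le_rfl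
  have hu : StronglyMeasurable[𝒢 ⊔ MeasurableSpace.comap Y' inferInstance] u :=
    ((hw.mono le_sup_left le_rfl).mul hY'ℋ).stronglyMeasurable
  have hwm : Measurable[mΩ] w := hw.mono h𝒢le le_rfl
  have habs : ∀ ω, |u ω| * |I ω| ≤ |Y' ω| := by
    intro ω
    calc |u ω| * |I ω| = |w ω| * |Y' ω| * |I ω| := by rw [hu_def, abs_mul]
      _ ≤ 1 * |Y' ω| * 1 :=
          mul_le_mul (mul_le_mul_of_nonneg_right (hwbd ω) (abs_nonneg _))
            (hIbd ω) (abs_nonneg _) (by positivity)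
      _ = |Y' ω| := by ring
  have huIint : Integrable (u * I) μ := by
    refine Integrable.mono' hY'int.abs
      ((hwm.mul hY').mul hIm).aestronglyMeasurable
      (Filter.Eventually.of_forall fun ω => ?_)
    simpa [Real.norm_eq_abs] using habs ω
  have hmul := condExp_mul_of_stronglyMeasurable_left
    (m := 𝒢 ⊔ MeasurableSpace.comap Y' inferInstance) hu huIint hIint
  calc ∫ ω, w ω * Y₀ ω * I ω ∂μ
      = ∫ ω, (u * I) ω ∂μ := by
        refine integral_congr_ae ?_
        filter_upwards [hae] with ω hω
        simp [hu_def, hω]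
    _ = ∫ ω, (μ[u * I|𝒢 ⊔ MeasurableSpace.comap Y' inferInstance]) ω ∂μ :=
        (integral_condExp hℋle).symm
    _ = ∫ ω, u ω * p₁ ω ∂μ := by
        refine integral_congr_ae ?_
        filter_upwards [hmul, hC] with ω hω1 hω2
        rw [hω1]
        simp only [Pi.mul_apply]
        rw [← hω2]
    _ = ∫ ω, w ω * Y₀ ω * p₁ ω ∂μ := by
        refine integral_congr_ae ?_
        filter_upwards [hae] with ω hω
        simp [hu_def, hω, mul_assoc]

end AuxStmt12

theorem stmt_12
    {Ω 𝒳 : Type*} (𝒢 : MeasurableSpace Ω) [mΩ : MeasurableSpace Ω] [StandardBorelSpace Ω]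
    [MeasurableSpace 𝒳]
    (P : Measure Ω) [IsProbabilityMeasure P]
    (X : Ω → 𝒳) (hX : Measurable X)
    (h𝒢 : 𝒢 = MeasurableSpace.comap X inferInstance)
    (h𝒢le : 𝒢 ≤ mΩ)
    (D : Ω → ℕ) (hD : Measurable D) (hD01 : ∀ ω, D ω = 0 ∨ D ω = 1)
    (hD1pos : 0 < P {ω | D ω = 1}) (hD1lt : P {ω | D ω = 1} < 1)
    (Y : ℕ → Ω → ℝ) (hY0int : Integrable (Y 0) P) (hY1int : Integrable (Y 1) P)
    (Yobs : Ω → ℝ)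
    (hYobs : ∀ ω, Yobs ω = (D ω : ℝ) * Y 1 ω + (1 - (D ω : ℝ)) * Y 0 ω)
    (p₁ : Ω → ℝ) (hp₁meas : Measurable[𝒢] p₁)
    (hp₁ : p₁ =ᵐ[P] P[fun ω => (D ω : ℝ) | 𝒢])
    (hp₁0 : ∀ ω, 0 ≤ p₁ ω) (hp₁1 : ∀ ω, p₁ ω ≤ 1)
    (hig0 : CondIndepFun 𝒢 h𝒢le (Y 0) D (μ := P))
    (hig1 : CondIndepFun 𝒢 h𝒢le (Y 1) D (μ := P))
    (Y2 : Ω → ℝ) (hY2 : ∀ ω, Y2 ω = p₁ ω * Y 1 ω + (1 - p₁ ω) * Y 0 ω)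
    (g₂ : Ω → ℝ) (hg₂meas : Measurable[𝒢] g₂) (hg₂int : Integrable g₂ P)
    (hg₂ : g₂ =ᵐ[P] P[Yobs | 𝒢])
    (κ : ℝ) (hκ : κ = ((P {ω | D ω = 1}).toReal)⁻¹ + ((P {ω | D ω = 0}).toReal)⁻¹)
    (δ₂ : ℝ)
    (hδ₂ : δ₂ = (condMean P (Y 1) D 1 - condMean P Y2 D 1)
             - (condMean P (Y 0) D 0 - condMean P Y2 D 0)) :
    δ₂ = κ * ∫ ω, (Yobs ω - g₂ ω) * ((D ω : ℝ) - p₁ ω) ∂P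
    ∧ ∫ ω, (κ * ((Yobs ω - g₂ ω) * ((D ω : ℝ) - p₁ ω)) - δ₂) ∂P = 0 := by
  -- basic pointwise facts about `D`
  have hχ1 : ∀ ω, (if D ω = 1 then (1:ℝ) else 0) = (D ω : ℝ) := by
    intro ω; rcases hD01 ω with h | h <;> simp [h]
  have hχ0 : ∀ ω, (if D ω = 0 then (1:ℝ) else 0) = 1 - (D ω : ℝ) := by
    intro ω; rcases hD01 ω with h | h <;> simp [h]
  have hI2 : ∀ ω, (D ω : ℝ) * (D ω : ℝ) = (D ω : ℝ) := by
    intro ω; rcases hD01 ω with h | h <;> simp [h]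
  have hIbd : ∀ ω, |(D ω : ℝ)| ≤ 1 := by
    intro ω; rcases hD01 ω with h | h <;> simp [h]
  -- measurability
  have hDm : Measurable[mΩ] D := hD
  have hIm : Measurable[mΩ] (fun ω => (D ω : ℝ)) := measurable_from_top.comp hDm
  have hp₁m : Measurable[mΩ] p₁ := hp₁meas.mono h𝒢le le_rfl
  have hp₁bd : ∀ ω, |p₁ ω| ≤ 1 := fun ω => abs_le.2 ⟨by linarith [hp₁0 ω], hp₁1 ω⟩
  have h1mp : ∀ ω, |1 - p₁ ω| ≤ 1 := fun ω => abs_le.2 ⟨by linarith [hp₁1 ω], by linarith [hp₁0 ω]⟩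
  -- integrability helpers
  have hIint : Integrable (fun ω => (D ω : ℝ)) P := aux_int_bdd hIm hIbd
  have hp₁int : Integrable p₁ P := aux_int_bdd hp₁m hp₁bd
  have hint2 : ∀ (v : Ω → ℝ), Measurable[mΩ] v → (∀ ω, |v ω| ≤ 1) →
      ∀ {Z : Ω → ℝ}, Integrable Z P → Integrable (fun ω => v ω * Z ω) P := by
    intro v hv hvb Z hZ
    exact hZ.bdd_mul hv.aestronglyMeasurable (c := 1) (Filter.Eventually.of_forall fun ω => by
      simpa [Real.norm_eq_abs] using hvb ω)
  have hint3 : ∀ (v : Ω → ℝ), Measurable[mΩ] v → (∀ ω, |v ω| ≤ 1) →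
      ∀ (u : Ω → ℝ), Measurable[mΩ] u → (∀ ω, |u ω| ≤ 1) →
      ∀ {Z : Ω → ℝ}, Integrable Z P → Integrable (fun ω => v ω * Z ω * u ω) P := by
    intro v hv hvb u hu hub Z hZ
    have h1 : Integrable (fun ω => (v ω * u ω) * Z ω) P := by
      refine hZ.bdd_mul (hv.mul hu).aestronglyMeasurable (c := 1) (Filter.Eventually.of_forall fun ω => ?_)
      rw [Real.norm_eq_abs, abs_mul]
      calc |v ω| * |u ω| ≤ 1 * 1 := mul_le_mul (hvb ω) (hub ω) (abs_nonneg _) zero_le_one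
        _ = 1 := by ring
    exact h1.congr (Filter.Eventually.of_forall fun ω => by ring)
  have h1mpm : Measurable[mΩ] (fun ω => 1 - p₁ ω) := measurable_const.sub hp₁m
  -- the six instances of the core identity
  have K1 : ∫ ω, (1:ℝ) * Y 1 ω * (D ω : ℝ) ∂P = ∫ ω, (1:ℝ) * Y 1 ω * p₁ ω ∂P :=
    aux_core h𝒢le hD hD01 hp₁meas hp₁ hp₁0 hp₁1 hY1int hig1
      (w := fun _ => (1:ℝ)) measurable_const (fun _ => by norm_num)
  have K0 : ∫ ω, (1:ℝ) * Y 0 ω * (D ω : ℝ) ∂P = ∫ ω, (1:ℝ) * Y 0 ω * p₁ ω ∂P :=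
    aux_core h𝒢le hD hD01 hp₁meas hp₁ hp₁0 hp₁1 hY0int hig0
      (w := fun _ => (1:ℝ)) measurable_const (fun _ => by norm_num)
  have Kp1 : ∫ ω, p₁ ω * Y 1 ω * (D ω : ℝ) ∂P = ∫ ω, p₁ ω * Y 1 ω * p₁ ω ∂P :=
    aux_core h𝒢le hD hD01 hp₁meas hp₁ hp₁0 hp₁1 hY1int hig1 (w := p₁) hp₁meas hp₁bd
  have Kp0 : ∫ ω, p₁ ω * Y 0 ω * (D ω : ℝ) ∂P = ∫ ω, p₁ ω * Y 0 ω * p₁ ω ∂P :=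
    aux_core h𝒢le hD hD01 hp₁meas hp₁ hp₁0 hp₁1 hY0int hig0 (w := p₁) hp₁meas hp₁bd
  have Kq0 : ∫ ω, (1 - p₁ ω) * Y 0 ω * (D ω : ℝ) ∂P
      = ∫ ω, (1 - p₁ ω) * Y 0 ω * p₁ ω ∂P :=
    aux_core h𝒢le hD hD01 hp₁meas hp₁ hp₁0 hp₁1 hY0int hig0
      (w := fun ω => 1 - p₁ ω) (measurable_const.sub hp₁meas) h1mp
  -- named scalars
  set a1 : ℝ := ∫ ω, p₁ ω * Y 1 ω ∂P with ha1
  set a0 : ℝ := ∫ ω, p₁ ω * Y 0 ω ∂P with ha0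
  set b1 : ℝ := ∫ ω, p₁ ω * p₁ ω * Y 1 ω ∂P with hb1
  set b0 : ℝ := ∫ ω, p₁ ω * p₁ ω * Y 0 ω ∂P with hb0
  set c0 : ℝ := ∫ ω, Y 0 ω ∂P with hc0
  -- integrable pieces
  have ip1Y1 : Integrable (fun ω => p₁ ω * Y 1 ω) P := hint2 p₁ hp₁m hp₁bd hY1int
  have ip1Y0 : Integrable (fun ω => p₁ ω * Y 0 ω) P := hint2 p₁ hp₁m hp₁bd hY0int
  have ip1Y1I : Integrable (fun ω => p₁ ω * Y 1 ω * (D ω : ℝ)) P :=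
    hint3 p₁ hp₁m hp₁bd _ hIm hIbd hY1int
  have ip1Y0I : Integrable (fun ω => p₁ ω * Y 0 ω * (D ω : ℝ)) P :=
    hint3 p₁ hp₁m hp₁bd _ hIm hIbd hY0int
  have iq0I : Integrable (fun ω => (1 - p₁ ω) * Y 0 ω * (D ω : ℝ)) P :=
    hint3 _ h1mpm h1mp _ hIm hIbd hY0int
  have iq0 : Integrable (fun ω => (1 - p₁ ω) * Y 0 ω) P := hint2 _ h1mpm h1mp hY0int
  have ipp1 : Integrable (fun ω => p₁ ω * Y 1 ω * p₁ ω) P :=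
    hint3 p₁ hp₁m hp₁bd p₁ hp₁m hp₁bd hY1int
  have ipp0 : Integrable (fun ω => p₁ ω * Y 0 ω * p₁ ω) P :=
    hint3 p₁ hp₁m hp₁bd p₁ hp₁m hp₁bd hY0int
  have iY1I : Integrable (fun ω => (1:ℝ) * Y 1 ω * (D ω : ℝ)) P :=
    hint3 _ measurable_const (fun _ => by norm_num) _ hIm hIbd hY1int
  have iY0I : Integrable (fun ω => (1:ℝ) * Y 0 ω * (D ω : ℝ)) P :=
    hint3 _ measurable_const (fun _ => by norm_num) _ hIm hIbd hY0int
  -- `∫ (1-p₁) Y0 p₁ = a0 - b0`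
  have hq0p : ∫ ω, (1 - p₁ ω) * Y 0 ω * p₁ ω ∂P = a0 - b0 := by
    have : ∫ ω, (1 - p₁ ω) * Y 0 ω * p₁ ω ∂P
        = ∫ ω, (p₁ ω * Y 0 ω - p₁ ω * p₁ ω * Y 0 ω) ∂P :=
      integral_congr_ae (Filter.Eventually.of_forall fun ω => by ring)
    rw [this, integral_sub ip1Y0 (hint3 p₁ hp₁m hp₁bd p₁ hp₁m hp₁bd hY0int |>.congr
      (Filter.Eventually.of_forall fun ω => by ring))]
  -- main numerator identities
  have T1 : ∫ ω, Y 1 ω * (if D ω = 1 then (1:ℝ) else 0) ∂P = a1 := by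
    have h1 : ∫ ω, Y 1 ω * (if D ω = 1 then (1:ℝ) else 0) ∂P
        = ∫ ω, (1:ℝ) * Y 1 ω * (D ω : ℝ) ∂P :=
      integral_congr_ae (Filter.Eventually.of_forall fun ω => by simp only [hχ1]; ring)
    rw [h1, K1, ha1]
    exact integral_congr_ae (Filter.Eventually.of_forall fun ω => by ring)
  have hY2I : ∫ ω, Y2 ω * (D ω : ℝ) ∂P = b1 + (a0 - b0) := by
    have h1 : ∫ ω, Y2 ω * (D ω : ℝ) ∂P
        = ∫ ω, (p₁ ω * Y 1 ω * (D ω : ℝ) + (1 - p₁ ω) * Y 0 ω * (D ω : ℝ)) ∂P :=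
      integral_congr_ae (Filter.Eventually.of_forall fun ω => by simp only [hY2]; ring)
    rw [h1, integral_add ip1Y1I iq0I, Kp1, Kq0, hq0p]
    congr 1
    rw [hb1]
    exact integral_congr_ae (Filter.Eventually.of_forall fun ω => by ring)
  have T2 : ∫ ω, Y2 ω * (if D ω = 1 then (1:ℝ) else 0) ∂P = b1 + (a0 - b0) := by
    rw [← hY2I]
    exact integral_congr_ae (Filter.Eventually.of_forall fun ω => by simp only [hχ1])
  have hY0I : ∫ ω, Y 0 ω * (D ω : ℝ) ∂P = a0 := by
    have h1 : ∫ ω, Y 0 ω * (D ω : ℝ) ∂P = ∫ ω, (1:ℝ) * Y 0 ω * (D ω : ℝ) ∂P :=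
      integral_congr_ae (Filter.Eventually.of_forall fun ω => by ring)
    rw [h1, K0, ha0]
    exact integral_congr_ae (Filter.Eventually.of_forall fun ω => by ring)
  have T3 : ∫ ω, Y 0 ω * (if D ω = 0 then (1:ℝ) else 0) ∂P = c0 - a0 := by
    have h1 : ∫ ω, Y 0 ω * (if D ω = 0 then (1:ℝ) else 0) ∂P
        = ∫ ω, (Y 0 ω - Y 0 ω * (D ω : ℝ)) ∂P :=
      integral_congr_ae (Filter.Eventually.of_forall fun ω => by simp only [hχ0]; ring)
    rw [h1, integral_sub hY0int (hint2 _ hIm hIbd hY0int |>.congr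
      (Filter.Eventually.of_forall fun ω => by ring)), hY0I, hc0]
  have hY2int : Integrable Y2 P := by
    have h1 : Integrable (fun ω => p₁ ω * Y 1 ω + (1 - p₁ ω) * Y 0 ω) P := ip1Y1.add iq0
    exact h1.congr (Filter.Eventually.of_forall fun ω => (hY2 ω).symm)
  have hY2tot : ∫ ω, Y2 ω ∂P = a1 + (c0 - a0) := by
    have h1 : ∫ ω, Y2 ω ∂P = ∫ ω, (p₁ ω * Y 1 ω + (1 - p₁ ω) * Y 0 ω) ∂P :=
      integral_congr_ae (Filter.Eventually.of_forall fun ω => hY2 ω)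
    have h2 : ∫ ω, (1 - p₁ ω) * Y 0 ω ∂P = c0 - a0 := by
      have h3 : ∫ ω, (1 - p₁ ω) * Y 0 ω ∂P = ∫ ω, (Y 0 ω - p₁ ω * Y 0 ω) ∂P :=
        integral_congr_ae (Filter.Eventually.of_forall fun ω => by ring)
      rw [h3, integral_sub hY0int ip1Y0, hc0, ha0]
    rw [h1, integral_add ip1Y1 iq0, h2, ha1]
  have T4 : ∫ ω, Y2 ω * (if D ω = 0 then (1:ℝ) else 0) ∂P
      = (a1 + (c0 - a0)) - (b1 + (a0 - b0)) := by
    have h1 : ∫ ω, Y2 ω * (if D ω = 0 then (1:ℝ) else 0) ∂P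
        = ∫ ω, (Y2 ω - Y2 ω * (D ω : ℝ)) ∂P :=
      integral_congr_ae (Filter.Eventually.of_forall fun ω => by simp only [hχ0]; ring)
    have hY2Iint : Integrable (fun ω => Y2 ω * (D ω : ℝ)) P := by
      have := hint2 _ hIm hIbd hY2int
      exact this.congr (Filter.Eventually.of_forall fun ω => by ring)
    rw [h1, integral_sub hY2int hY2Iint, hY2tot, hY2I]
  -- observed outcome facts
  have hYobsint : Integrable Yobs P := by
    have h1 : Integrable (fun ω => (D ω : ℝ) * Y 1 ω + (1 - (D ω : ℝ)) * Y 0 ω) P := by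
      refine (hint2 _ hIm hIbd hY1int).add (hint2 _ (measurable_const.sub hIm)
        (fun ω => ?_) hY0int)
      rcases hD01 ω with h | h <;> simp [h]
    exact h1.congr (Filter.Eventually.of_forall fun ω => (hYobs ω).symm)
  have hYobsI : ∫ ω, Yobs ω * (D ω : ℝ) ∂P = a1 := by
    have h1 : ∫ ω, Yobs ω * (D ω : ℝ) ∂P = ∫ ω, (1:ℝ) * Y 1 ω * (D ω : ℝ) ∂P := by
      refine integral_congr_ae (Filter.Eventually.of_forall fun ω => ?_)
      rcases hD01 ω with h | h <;> simp [hYobs, h]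
    rw [h1, K1, ha1]
    exact integral_congr_ae (Filter.Eventually.of_forall fun ω => by ring)
  have hYobsp : ∫ ω, Yobs ω * p₁ ω ∂P = b1 + (a0 - b0) := by
    have h1 : ∫ ω, Yobs ω * p₁ ω ∂P
        = ∫ ω, (p₁ ω * Y 1 ω * (D ω : ℝ) + (p₁ ω * Y 0 ω - p₁ ω * Y 0 ω * (D ω : ℝ))) ∂P :=
      integral_congr_ae (Filter.Eventually.of_forall fun ω => by simp only [hYobs]; ring)
    have ipd0 : Integrable (fun ω => p₁ ω * Y 0 ω - p₁ ω * Y 0 ω * (D ω : ℝ)) P :=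
      (ip1Y0.sub ip1Y0I).congr (Filter.Eventually.of_forall fun ω => rfl)
    rw [h1, integral_add ip1Y1I ipd0, integral_sub ip1Y0 ip1Y0I, Kp1, Kp0]
    have e1 : ∫ ω, p₁ ω * Y 1 ω * p₁ ω ∂P = b1 := by
      rw [hb1]; exact integral_congr_ae (Filter.Eventually.of_forall fun ω => by ring)
    have e0 : ∫ ω, p₁ ω * Y 0 ω * p₁ ω ∂P = b0 := by
      rw [hb0]; exact integral_congr_ae (Filter.Eventually.of_forall fun ω => by ring)
    rw [e1, e0, ha0]
  -- the `g₂` term vanishes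
  have hg₂I : Integrable (fun ω => g₂ ω * (D ω : ℝ)) P := by
    refine Integrable.mono' hg₂int.abs (hg₂int.1.mul hIm.aestronglyMeasurable)
      (Filter.Eventually.of_forall fun ω => ?_)
    rw [Real.norm_eq_abs, abs_mul]
    calc |g₂ ω| * |(D ω : ℝ)| ≤ |g₂ ω| * 1 :=
          mul_le_mul_of_nonneg_left (hIbd ω) (abs_nonneg _)
      _ = |g₂ ω| := by ring
  have hg₂p : Integrable (fun ω => g₂ ω * p₁ ω) P := by
    refine Integrable.mono' hg₂int.abs (hg₂int.1.mul hp₁m.aestronglyMeasurable)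
      (Filter.Eventually.of_forall fun ω => ?_)
    rw [Real.norm_eq_abs, abs_mul]
    calc |g₂ ω| * |p₁ ω| ≤ |g₂ ω| * 1 :=
          mul_le_mul_of_nonneg_left (hp₁bd ω) (abs_nonneg _)
      _ = |g₂ ω| := by ring
  have hg₂zero : ∫ ω, g₂ ω * (D ω : ℝ) ∂P = ∫ ω, g₂ ω * p₁ ω ∂P := by
    rw [aux_pull h𝒢le hg₂meas.stronglyMeasurable hIint hg₂I]
    refine integral_congr_ae ?_
    filter_upwards [hp₁] with ω hω
    rw [← hω]
  -- the score integral
  have T5 : ∫ ω, (Yobs ω - g₂ ω) * ((D ω : ℝ) - p₁ ω) ∂P = (a1 - b1) - (a0 - b0) := by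
    have h1 : ∫ ω, (Yobs ω - g₂ ω) * ((D ω : ℝ) - p₁ ω) ∂P
        = ∫ ω, ((Yobs ω * (D ω : ℝ) - Yobs ω * p₁ ω)
            - (g₂ ω * (D ω : ℝ) - g₂ ω * p₁ ω)) ∂P :=
      integral_congr_ae (Filter.Eventually.of_forall fun ω => by ring)
    have iYobsI : Integrable (fun ω => Yobs ω * (D ω : ℝ)) P := by
      have := hint2 _ hIm hIbd hYobsint
      exact this.congr (Filter.Eventually.of_forall fun ω => by ring)
    have iYobsp : Integrable (fun ω => Yobs ω * p₁ ω) P := by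
      have := hint2 _ hp₁m hp₁bd hYobsint
      exact this.congr (Filter.Eventually.of_forall fun ω => by ring)
    have i1 : Integrable (fun ω => Yobs ω * (D ω : ℝ) - Yobs ω * p₁ ω) P :=
      (iYobsI.sub iYobsp).congr (Filter.Eventually.of_forall fun ω => rfl)
    have i2 : Integrable (fun ω => g₂ ω * (D ω : ℝ) - g₂ ω * p₁ ω) P :=
      (hg₂I.sub hg₂p).congr (Filter.Eventually.of_forall fun ω => rfl)
    rw [h1, integral_sub i1 i2,
      integral_sub iYobsI iYobsp, integral_sub hg₂I hg₂p, hYobsI, hYobsp, hg₂zero]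
    ring
  -- positivity of group masses
  have hq1pos : 0 < (P {ω | D ω = 1}).toReal :=
    ENNReal.toReal_pos hD1pos.ne' (measure_ne_top P _)
  have hA1 : MeasurableSet[mΩ] {ω | D ω = 1} := hDm (measurableSet_singleton 1)
  have hset0 : {ω | D ω = 0} = {ω | D ω = 1}ᶜ := by
    ext ω
    rcases hD01 ω with h | h <;> simp [h]
  have hP0 : P {ω | D ω = 0} = 1 - P {ω | D ω = 1} := by
    rw [hset0, prob_compl_eq_one_sub hA1]
  have hq0pos : 0 < (P {ω | D ω = 0}).toReal := by
    rw [hP0]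
    refine ENNReal.toReal_pos ?_ (by
      exact ne_top_of_le_ne_top ENNReal.one_ne_top tsub_le_self)
    exact (tsub_pos_iff_lt.mpr hD1lt).ne'
  -- conclusion
  have hfint : Integrable (fun ω => (Yobs ω - g₂ ω) * ((D ω : ℝ) - p₁ ω)) P := by
    have hw : Measurable[mΩ] (fun ω => (D ω : ℝ) - p₁ ω) := hIm.sub hp₁m
    have hwb : ∀ ω, |(D ω : ℝ) - p₁ ω| ≤ 2 := by
      intro ω
      calc |(D ω : ℝ) - p₁ ω| ≤ |(D ω : ℝ)| + |p₁ ω| := abs_sub _ _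
        _ ≤ 1 + 1 := add_le_add (hIbd ω) (hp₁bd ω)
        _ = 2 := by norm_num
    have h1 : Integrable (fun ω => ((D ω : ℝ) - p₁ ω) * (Yobs ω - g₂ ω)) P :=
      (hYobsint.sub hg₂int).bdd_mul hw.aestronglyMeasurable
        (c := 2) (Filter.Eventually.of_forall fun ω => by simpa [Real.norm_eq_abs] using hwb ω)
    exact h1.congr (Filter.Eventually.of_forall fun ω => by ring)
  have main1 : δ₂ = κ * ∫ ω, (Yobs ω - g₂ ω) * ((D ω : ℝ) - p₁ ω) ∂P := by
    rw [hδ₂, hκ, T5]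
    simp only [condMean]
    rw [T1, T2, T3, T4]
    have h1 : (P {ω | D ω = 1}).toReal ≠ 0 := ne_of_gt hq1pos
    have h0 : (P {ω | D ω = 0}).toReal ≠ 0 := ne_of_gt hq0pos
    field_simp
    ring
  refine ⟨main1, ?_⟩
  rw [integral_sub (hfint.const_mul κ) (integrable_const δ₂), integral_const]
  simp only [measure_univ, probReal_univ, ENNReal.toReal_one, smul_eq_mul, one_mul]
  rw [integral_const_mul]
  rw [main1]
  exact sub_self _
end

section
/- (Moment/identification condition for the explained-part score ψ_{2,X}.) Assume ignorability for Y(0) and ignorability for Y(1). Write P₁ = P(D = 1) and P₀ = P(D = 0), and let Δ_X² = E[Y(2) | D = 1] − E[Y(2) | D = 0] be the explained part under the equilibrium reference. Then Δ_X² = (1/(P₁·P₀))·E[(Y^obs − g₂)·(p₁ − P₁) + g₂·(D − P₁)]. -/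
open MeasureTheory ProbabilityTheory Filter Set
open scoped ENNReal

open MeasureTheory ProbabilityTheory Filter Set

section Helpers

variable {Ω : Type*}

/-- Pull-out at the integral level. -/
lemma int_mul_condexp {m mΩ : MeasurableSpace Ω} (hm : m ≤ mΩ)
    (P : Measure Ω) [IsProbabilityMeasure P] {u f : Ω → ℝ}
    (hu : StronglyMeasurable[m] u) (hf : Integrable f P)
    (hint : Integrable (fun ω => u ω * f ω) P) :
    ∫ ω, u ω * f ω ∂P = ∫ ω, u ω * (P[f|m]) ω ∂P := by
  have h1 : P[fun ω => u ω * f ω|m] =ᵐ[P] fun ω => u ω * (P[f|m]) ω :=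
    condExp_mul_of_stronglyMeasurable_left hu hint hf
  calc ∫ ω, u ω * f ω ∂P = ∫ ω, (P[fun ω => u ω * f ω|m]) ω ∂P :=
        (integral_condExp hm).symm
    _ = ∫ ω, u ω * (P[f|m]) ω ∂P := integral_congr_ae h1

/-- Pull-out at condexp level, with the bounded factor. -/
lemma condexp_mul_of_stronglyMeasurable {m mΩ : MeasurableSpace Ω}
    (P : Measure Ω) [IsProbabilityMeasure P] {u f : Ω → ℝ}
    (hu : StronglyMeasurable[m] u) (hf : Integrable f P)
    (hint : Integrable (fun ω => u ω * f ω) P) :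
    P[fun ω => u ω * f ω|m] =ᵐ[P] fun ω => u ω * (P[f|m]) ω :=
  condExp_mul_of_stronglyMeasurable_left hu hint hf

/-- conditional independence respects a.e. modification of the first function. -/
lemma condIndepFun_congr_left {β γ : Type*} {𝒢 : MeasurableSpace Ω}
    [mΩ : MeasurableSpace Ω] [StandardBorelSpace Ω]
    [MeasurableSpace β] [MeasurableSpace γ]
    (h𝒢le : 𝒢 ≤ mΩ) {P : Measure Ω} [IsProbabilityMeasure P]
    {f f' : Ω → β} {g : Ω → γ}
    (h : CondIndepFun 𝒢 h𝒢le f g (μ := P)) (hff' : f =ᵐ[P] f') :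
    CondIndepFun 𝒢 h𝒢le f' g (μ := P) := by
  have h' : ProbabilityTheory.Kernel.IndepFun f g (condExpKernel P 𝒢) (P.trim h𝒢le) := h
  have key : ∀ᵐ ω ∂(P.trim h𝒢le), f =ᵐ[condExpKernel P 𝒢 ω] f' := by
    set t := toMeasurable P {ω | f ω ≠ f' ω} with ht_def
    have htm : MeasurableSet t := measurableSet_toMeasurable _ _
    have hPt : P t = 0 := by
      rw [ht_def, measure_toMeasurable]
      exact hff'
    have h0 : (P[t.indicator (fun _ => (1:ℝ))|𝒢]) =ᵐ[P] 0 := by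
      have hind : (t.indicator (fun _ => (1:ℝ))) =ᵐ[P] 0 := by
        have : ∀ᵐ ω ∂P, ω ∉ t := by
          rw [ae_iff]; simpa using hPt
        filter_upwards [this] with ω hω
        simp [Set.indicator_of_notMem hω]
      exact (condExp_congr_ae hind).trans (by rw [condExp_zero])
    have h1 : ∀ᵐ ω ∂P, condExpKernel P 𝒢 ω t = 0 := by
      filter_upwards [condExpKernel_ae_eq_condExp h𝒢le htm, h0] with ω hω h0ω
      have hz : (condExpKernel P 𝒢 ω t).toReal = 0 := by
        exact hω.trans h0ω
      have hne : condExpKernel P 𝒢 ω t ≠ ⊤ := measure_ne_top _ _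
      simpa [ENNReal.toReal_eq_zero_iff, hne] using hz
    have hmeas : MeasurableSet[𝒢] {ω | condExpKernel P 𝒢 ω t = 0} := by
      exact measurable_condExpKernel htm (measurableSet_singleton 0)
    have h2 : ∀ᵐ ω ∂(P.trim h𝒢le), condExpKernel P 𝒢 ω t = 0 := by
      rw [ae_iff]
      have hc : {ω | ¬ condExpKernel P 𝒢 ω t = 0} = {ω | condExpKernel P 𝒢 ω t = 0}ᶜ := rfl
      rw [hc, trim_measurableSet_eq h𝒢le hmeas.compl]
      exact ae_iff.mp h1
    filter_upwards [h2] with ω hω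
    rw [Filter.EventuallyEq, ae_iff]
    exact measure_mono_null (fun x hx => subset_toMeasurable P _ hx) hω
  exact h'.congr' key (Filter.Eventually.of_forall fun ω => Filter.EventuallyEq.rfl)

end Helpers
open MeasureTheory ProbabilityTheory Filter Set

lemma keyK {Ω : Type*} {𝒢 m2 m : MeasurableSpace Ω}
    [mΩ : MeasurableSpace Ω] [StandardBorelSpace Ω]
    (h𝒢le : 𝒢 ≤ mΩ) (P : Measure Ω) [IsProbabilityMeasure P]
    {f : Ω → ℝ} (hf : Measurable f)
    (hm2_def : m2 = MeasurableSpace.comap f Real.measurableSpace)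
    (hm_def : m = 𝒢 ⊔ m2)
    {B : Set Ω} (hBm : MeasurableSet B)
    (hprod : ∀ s : Set ℝ, MeasurableSet s →
      (P[((f ⁻¹' s) ∩ B).indicator (fun _ => (1:ℝ)) | 𝒢]) =ᵐ[P]
        fun ω => (P[(f ⁻¹' s).indicator (fun _ => (1:ℝ)) | 𝒢]) ω
          * (P[B.indicator (fun _ => (1:ℝ)) | 𝒢]) ω)
    {p₁ : Ω → ℝ} (hp₁meas : Measurable[𝒢] p₁)
    (hp₁0 : ∀ ω, 0 ≤ p₁ ω) (hp₁1 : ∀ ω, p₁ ω ≤ 1)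
    (hp₁ : p₁ =ᵐ[P] P[B.indicator (fun _ => (1:ℝ)) | 𝒢]) :
    p₁ =ᵐ[P] P[B.indicator (fun _ => (1:ℝ)) | m] := by
  have hm2 : m2 ≤ mΩ := hm2_def ▸ hf.comap_le
  have hm : m ≤ mΩ := hm_def ▸ sup_le h𝒢le hm2
  set indB : Ω → ℝ := B.indicator (fun _ => (1:ℝ)) with hindB_def
  have hp₁mΩ : Measurable p₁ := hp₁meas.mono h𝒢le le_rfl
  have hp₁int : Integrable p₁ P := by
    refine ⟨hp₁mΩ.aestronglyMeasurable, ?_⟩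
    refine HasFiniteIntegral.of_bounded (C := 1) (Filter.Eventually.of_forall fun ω => ?_)
    rw [Real.norm_eq_abs, abs_le]
    exact ⟨by linarith [hp₁0 ω], hp₁1 ω⟩
  have hindint : ∀ (A : Set Ω), MeasurableSet A →
      Integrable (A.indicator (fun _ => (1:ℝ))) P :=
    fun A hA => (integrable_const (1:ℝ)).indicator hA
  -- the generating π-system
  set C : Set (Set Ω) :=
    {s | ∃ G A, MeasurableSet[𝒢] G ∧ MeasurableSet[m2] A ∧ s = G ∩ A} with hC_def
  have h_pi : IsPiSystem C := by
    rintro s ⟨G1, A1, hG1, hA1, rfl⟩ t ⟨G2, A2, hG2, hA2, rfl⟩ _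
    exact ⟨G1 ∩ G2, A1 ∩ A2, hG1.inter hG2, hA1.inter hA2, by
      rw [Set.inter_inter_inter_comm]⟩
  have h_eq : m = MeasurableSpace.generateFrom C := by
    rw [hm_def]
    refine le_antisymm (sup_le ?_ ?_) (MeasurableSpace.generateFrom_le ?_)
    · intro s hs
      exact MeasurableSpace.measurableSet_generateFrom
        ⟨s, Set.univ, hs, MeasurableSet.univ, (Set.inter_univ s).symm⟩
    · intro s hs
      exact MeasurableSpace.measurableSet_generateFrom
        ⟨Set.univ, s, MeasurableSet.univ, hs, (Set.univ_inter s).symm⟩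
    · rintro t ⟨G, A, hG, hA, rfl⟩
      exact ((le_sup_left : 𝒢 ≤ 𝒢 ⊔ m2) _ hG).inter ((le_sup_right : m2 ≤ 𝒢 ⊔ m2) _ hA)
  -- total masses agree
  have htot : ∫ ω, p₁ ω ∂P = ∫ ω, indB ω ∂P := by
    rw [integral_congr_ae hp₁, integral_condExp h𝒢le]
  -- base case
  have hbase : ∀ G A, MeasurableSet[𝒢] G → MeasurableSet[m2] A →
      ∫ ω in G ∩ A, p₁ ω ∂P = ∫ ω in G ∩ A, indB ω ∂P := by
    intro G A hG hA
    rw [hm2_def] at hA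
    obtain ⟨s, hs, rfl⟩ := hA
    set A := f ⁻¹' s with hA_def
    have hAm : MeasurableSet A := hf hs
    have hGm : MeasurableSet G := h𝒢le _ hG
    set indA : Ω → ℝ := A.indicator (fun _ => (1:ℝ)) with hindA_def
    have hmulA : Integrable (fun ω => p₁ ω * indA ω) P :=
      (hindint A hAm).bdd_mul hp₁mΩ.aestronglyMeasurable
        (Filter.Eventually.of_forall fun ω => by rw [Real.norm_eq_abs, abs_le]; exact ⟨by linarith [hp₁0 ω], hp₁1 ω⟩)
    have hpull : P[fun ω => p₁ ω * indA ω|𝒢] =ᵐ[P] fun ω => p₁ ω * (P[indA|𝒢]) ω :=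
      condExp_mul_of_stronglyMeasurable_left hp₁meas.stronglyMeasurable hmulA (hindint A hAm)
    have hL : ∫ ω in G ∩ A, p₁ ω ∂P = ∫ ω in G, p₁ ω * (P[indA|𝒢]) ω ∂P := by
      rw [← setIntegral_indicator hAm]
      have e2 : ∀ ω, A.indicator p₁ ω = p₁ ω * indA ω := by
        intro ω; by_cases h : ω ∈ A <;> simp [hindA_def, h]
      calc ∫ ω in G, A.indicator p₁ ω ∂P = ∫ ω in G, p₁ ω * indA ω ∂P := by
            exact setIntegral_congr_fun hGm (fun ω _ => e2 ω)
        _ = ∫ ω in G, (P[fun ω => p₁ ω * indA ω|𝒢]) ω ∂P :=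
            (setIntegral_condExp h𝒢le hmulA hG).symm
        _ = ∫ ω in G, p₁ ω * (P[indA|𝒢]) ω ∂P :=
            integral_congr_ae (ae_restrict_of_ae hpull)
    have hR : ∫ ω in G ∩ A, indB ω ∂P = ∫ ω in G, (P[indA|𝒢]) ω * p₁ ω ∂P := by
      rw [← setIntegral_indicator hAm]
      have e3 : ∀ ω, A.indicator indB ω = (A ∩ B).indicator (fun _ => (1:ℝ)) ω := by
        intro ω
        by_cases h1 : ω ∈ A <;> by_cases h2 : ω ∈ B <;>
          simp [hindB_def, h1, h2, Set.indicator_of_mem, Set.indicator_of_notMem,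
            Set.mem_inter_iff]
      calc ∫ ω in G, A.indicator indB ω ∂P
          = ∫ ω in G, (A ∩ B).indicator (fun _ => (1:ℝ)) ω ∂P :=
            setIntegral_congr_fun hGm (fun ω _ => e3 ω)
        _ = ∫ ω in G, (P[(A ∩ B).indicator (fun _ => (1:ℝ))|𝒢]) ω ∂P :=
            (setIntegral_condExp h𝒢le (hindint _ (hAm.inter hBm)) hG).symm
        _ = ∫ ω in G, (P[indA|𝒢]) ω * p₁ ω ∂P := by
            refine integral_congr_ae (ae_restrict_of_ae ?_)
            filter_upwards [hprod s hs, hp₁] with ω h1 h2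
            rw [h1, ← h2]
    rw [hL, hR]
    exact setIntegral_congr_fun hGm (fun ω _ => mul_comm _ _)
  -- induction
  have hind : ∀ ⦃t : Set Ω⦄, MeasurableSet[m] t →
      ∫ ω in t, p₁ ω ∂P = ∫ ω in t, indB ω ∂P := by
    intro t₀ ht₀; refine MeasurableSpace.induction_on_inter
      (C := fun t _ => ∫ ω in t, p₁ ω ∂P = ∫ ω in t, indB ω ∂P) h_eq h_pi ?_ ?_ ?_ ?_ t₀ ht₀
    · simp
    · rintro t ⟨G, A, hG, hA, rfl⟩
      exact hbase G A hG hA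
    · intro t htm ht
      have htm' : MeasurableSet t := hm _ htm
      have h1 := integral_add_compl htm' hp₁int
      have h2 := integral_add_compl htm' (hindint B hBm)
      simp only [← hindB_def] at h2
      linarith
    · intro g hdisj hmeas hpred
      have hgm : ∀ i, MeasurableSet (g i) := fun i => hm _ (hmeas i)
      rw [integral_iUnion hgm hdisj hp₁int.integrableOn,
        integral_iUnion hgm hdisj (hindint B hBm).integrableOn]
      exact tsum_congr hpred
  exact ae_eq_condExp_of_forall_setIntegral_eq hm (hindint B hBm)
    (fun s _ _ => hp₁int.integrableOn)
    (fun s hs _ => hind hs)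
    ((hp₁meas.mono (hm_def ▸ le_sup_left : 𝒢 ≤ m) le_rfl).stronglyMeasurable.aestronglyMeasurable)
open MeasureTheory ProbabilityTheory Filter Set

lemma condexp_mul_indicator_of_key {Ω : Type*} {𝒢 m : MeasurableSpace Ω}
    [mΩ : MeasurableSpace Ω] [StandardBorelSpace Ω]
    (h𝒢le : 𝒢 ≤ mΩ) (P : Measure Ω) [IsProbabilityMeasure P]
    {Y' : Ω → ℝ} (hY' : Measurable Y') (hY'int : Integrable Y' P)
    (hm_def : m = 𝒢 ⊔ MeasurableSpace.comap Y' Real.measurableSpace)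
    {B : Set Ω} (hBm : MeasurableSet B)
    {p₁ : Ω → ℝ} (hp₁meas : Measurable[𝒢] p₁)
    (hp₁0 : ∀ ω, 0 ≤ p₁ ω) (hp₁1 : ∀ ω, p₁ ω ≤ 1)
    (hK : p₁ =ᵐ[P] P[B.indicator (fun _ => (1:ℝ)) | m]) :
    (P[fun ω => Y' ω * B.indicator (fun _ => (1:ℝ)) ω | 𝒢]) =ᵐ[P]
      fun ω => p₁ ω * (P[Y'|𝒢]) ω := by
  have hm : m ≤ mΩ := hm_def ▸ sup_le h𝒢le hY'.comap_le
  have h𝒢m : 𝒢 ≤ m := hm_def ▸ le_sup_left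
  set indB : Ω → ℝ := B.indicator (fun _ => (1:ℝ)) with hindB_def
  have hindB_asm : AEStronglyMeasurable indB P :=
    ((stronglyMeasurable_const.indicator hBm : StronglyMeasurable[mΩ] indB)).aestronglyMeasurable
  have hindB_bd : ∀ ω, ‖indB ω‖ ≤ 1 := by
    intro ω; by_cases h : ω ∈ B <;>
      simp [hindB_def, Set.indicator_of_mem, Set.indicator_of_notMem, h]
  have hindBint : Integrable indB P :=
    ⟨hindB_asm, HasFiniteIntegral.of_bounded (C := 1) (Eventually.of_forall hindB_bd)⟩
  have hindB_asm : AEStronglyMeasurable indB P :=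
    (stronglyMeasurable_const.indicator hBm).aestronglyMeasurable
  have hindB_bd : ∀ ω, ‖indB ω‖ ≤ 1 := by
    intro ω; by_cases h : ω ∈ B <;> simp [hindB_def, h]
  have hY'sm : StronglyMeasurable[m] Y' := by
    have : Measurable[MeasurableSpace.comap Y' Real.measurableSpace] Y' :=
      Measurable.of_comap_le le_rfl
    exact (this.mono (hm_def ▸ le_sup_right) le_rfl).stronglyMeasurable
  have hint1 : Integrable (fun ω => Y' ω * indB ω) P :=
    (hY'int.bdd_mul hindB_asm (Filter.Eventually.of_forall hindB_bd)).congr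
      (Eventually.of_forall fun ω => mul_comm _ _)
  have hp₁bd : ∀ ω, ‖p₁ ω‖ ≤ 1 := fun ω => by
    rw [Real.norm_eq_abs, abs_le]; exact ⟨by linarith [hp₁0 ω], hp₁1 ω⟩
  have hint2 : Integrable (fun ω => p₁ ω * Y' ω) P :=
    hY'int.bdd_mul (hp₁meas.mono h𝒢le le_rfl).aestronglyMeasurable (Filter.Eventually.of_forall hp₁bd)
  -- inner pull-out at m
  have hinner : P[fun ω => Y' ω * indB ω|m] =ᵐ[P] fun ω => Y' ω * p₁ ω := by
    have h1 : P[fun ω => Y' ω * indB ω|m] =ᵐ[P] fun ω => Y' ω * (P[indB|m]) ω :=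
      condExp_mul_of_stronglyMeasurable_left hY'sm hint1 hindBint
    filter_upwards [h1, hK] with ω h1ω h2ω
    rw [h1ω, ← h2ω]
  -- tower
  have htower : P[fun ω => Y' ω * indB ω|𝒢]
      =ᵐ[P] P[fun ω => Y' ω * p₁ ω|𝒢] :=
    ((condExp_condExp_of_le h𝒢m hm).symm).trans (condExp_congr_ae hinner)
  -- pull out p₁ at 𝒢
  have hfinal : P[fun ω => p₁ ω * Y' ω|𝒢] =ᵐ[P] fun ω => p₁ ω * (P[Y'|𝒢]) ω :=
    condExp_mul_of_stronglyMeasurable_left hp₁meas.stronglyMeasurable hint2 hY'int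
  refine htower.trans ?_
  have : (fun ω => Y' ω * p₁ ω) = fun ω => p₁ ω * Y' ω := funext fun ω => mul_comm _ _
  rw [this]
  exact hfinal


/-- moment/identification condition for the explained-part score `ψ_{2,X}`:
the explained part under the equilibrium reference satisfies
`Δ_X² = (1/(P₁·P₀))·E[(Y^obs - g₂)·(p₁ - P₁) + g₂·(D - P₁)]`. -/
theorem stmt_14
    {Ω 𝒳 : Type*} (𝒢 : MeasurableSpace Ω) [mΩ : MeasurableSpace Ω] [StandardBorelSpace Ω]
    [MeasurableSpace 𝒳]
    (P : Measure Ω) [IsProbabilityMeasure P]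
    (X : Ω → 𝒳) (hX : Measurable X)
    (h𝒢 : 𝒢 = MeasurableSpace.comap X inferInstance)
    (h𝒢le : 𝒢 ≤ mΩ)
    (D : Ω → ℕ) (hD : Measurable D) (hD01 : ∀ ω, D ω = 0 ∨ D ω = 1)
    (hD1pos : 0 < P {ω | D ω = 1}) (hD1lt : P {ω | D ω = 1} < 1)
    (Y : ℕ → Ω → ℝ) (hY0int : Integrable (Y 0) P) (hY1int : Integrable (Y 1) P)
    (Yobs : Ω → ℝ)
    (hYobs : ∀ ω, Yobs ω = (D ω : ℝ) * Y 1 ω + (1 - (D ω : ℝ)) * Y 0 ω)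
    (p₁ : Ω → ℝ) (hp₁meas : Measurable[𝒢] p₁)
    (hp₁ : p₁ =ᵐ[P] P[fun ω => (D ω : ℝ) | 𝒢])
    (hp₁0 : ∀ ω, 0 ≤ p₁ ω) (hp₁1 : ∀ ω, p₁ ω ≤ 1)
    (hig0 : CondIndepFun 𝒢 h𝒢le (Y 0) D (μ := P))
    (hig1 : CondIndepFun 𝒢 h𝒢le (Y 1) D (μ := P))
    (Y2 : Ω → ℝ) (hY2 : ∀ ω, Y2 ω = p₁ ω * Y 1 ω + (1 - p₁ ω) * Y 0 ω)
    (g₂ : Ω → ℝ) (hg₂meas : Measurable[𝒢] g₂) (hg₂int : Integrable g₂ P)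
    (hg₂ : g₂ =ᵐ[P] P[Yobs | 𝒢]) :
    condMean P Y2 D 1 - condMean P Y2 D 0
      = ((P {ω | D ω = 1}).toReal * (P {ω | D ω = 0}).toReal)⁻¹
        * ∫ ω, (Yobs ω - g₂ ω) * (p₁ ω - (P {ω | D ω = 1}).toReal)
            + g₂ ω * ((D ω : ℝ) - (P {ω | D ω = 1}).toReal) ∂P := by
  have hD' : Measurable[mΩ] D := hD
  have hBm : MeasurableSet[mΩ] {ω | D ω = 1} := hD' (measurableSet_singleton 1)
  set B : Set Ω := {ω | D ω = 1} with hB_def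
  set indB : Ω → ℝ := B.indicator (fun _ => (1:ℝ)) with hindB_def
  have hdR : ∀ ω, (D ω : ℝ) = indB ω := by
    intro ω
    rcases hD01 ω with h | h
    · have hω : ω ∉ B := by simp [hB_def, h]
      simp [hindB_def, Set.indicator_of_notMem hω, h]
    · have hω : ω ∈ B := h
      simp [hindB_def, Set.indicator_of_mem hω, h]
  have hindB_asm : AEStronglyMeasurable[mΩ] indB P :=
    ((stronglyMeasurable_const.indicator hBm : StronglyMeasurable[mΩ] indB)).aestronglyMeasurable
  have hindB_bd : ∀ ω, ‖indB ω‖ ≤ 1 := by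
    intro ω; by_cases h : ω ∈ B <;>
      simp [hindB_def, Set.indicator_of_mem, Set.indicator_of_notMem, h]
  have hindBint : Integrable indB P :=
    ⟨hindB_asm, HasFiniteIntegral.of_bounded (C := 1) (Eventually.of_forall hindB_bd)⟩
  have hBc : {ω | D ω = 0} = Bᶜ := by
    ext ω; rcases hD01 ω with h | h <;> simp [hB_def, h]
  -- probability numbers
  have hPBne : P B ≠ ⊤ := measure_ne_top P B
  set P1 : ℝ := (P B).toReal with hP1_def
  have hP1pos : 0 < P1 := ENNReal.toReal_pos (ne_of_gt hD1pos) hPBne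
  have hP1lt : P1 < 1 := by
    have := (ENNReal.toReal_lt_toReal hPBne (by simp : (1:ℝ≥0∞) ≠ ⊤)).mpr hD1lt
    simpa using this
  have hPBc : (P Bᶜ).toReal = 1 - P1 := by
    rw [hP1_def, measure_compl hBm hPBne, measure_univ,
      ENNReal.toReal_sub_of_le hD1lt.le (by simp)]
    simp
  -- p₁ basics
  have hp₁mΩ : Measurable[mΩ] p₁ := hp₁meas.mono h𝒢le le_rfl
  have hp₁asm : AEStronglyMeasurable[mΩ] p₁ P := hp₁mΩ.aestronglyMeasurable
  have hp₁bd : ∀ ω, ‖p₁ ω‖ ≤ 1 := fun ω => by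
    rw [Real.norm_eq_abs, abs_le]; exact ⟨by linarith [hp₁0 ω], hp₁1 ω⟩
  have h1mp₁bd : ∀ ω, ‖1 - p₁ ω‖ ≤ 1 := fun ω => by
    rw [Real.norm_eq_abs, abs_le]; exact ⟨by linarith [hp₁1 ω], by linarith [hp₁0 ω]⟩
  have h1mp₁asm : AEStronglyMeasurable[mΩ] (fun ω => 1 - p₁ ω) P :=
    ((measurable_const.sub hp₁mΩ : Measurable[mΩ] fun ω => 1 - p₁ ω)).aestronglyMeasurable
  have hp₁sm : StronglyMeasurable[𝒢] p₁ := hp₁meas.stronglyMeasurable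
  have h1mp₁sm : StronglyMeasurable[𝒢] (fun ω => 1 - p₁ ω) :=
    stronglyMeasurable_const.sub hp₁sm
  have hp₁' : p₁ =ᵐ[P] P[indB|𝒢] := by
    have hfe : (fun ω => (D ω : ℝ)) = indB := funext hdR
    rw [← hfe]; exact hp₁
  -- measurable modifications of the potential outcomes
  set Y1' : Ω → ℝ := hY1int.1.mk (Y 1) with hY1'def
  have hY1'meas : Measurable[mΩ] Y1' := hY1int.1.stronglyMeasurable_mk.measurable
  have hY1'eq : Y 1 =ᵐ[P] Y1' := hY1int.1.ae_eq_mk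
  have hY1'int : Integrable Y1' P := hY1int.congr hY1'eq
  set Y0' : Ω → ℝ := hY0int.1.mk (Y 0) with hY0'def
  have hY0'meas : Measurable[mΩ] Y0' := hY0int.1.stronglyMeasurable_mk.measurable
  have hY0'eq : Y 0 =ᵐ[P] Y0' := hY0int.1.ae_eq_mk
  have hY0'int : Integrable Y0' P := hY0int.congr hY0'eq
  -- conditional independence for the modifications
  have hig1' : CondIndepFun 𝒢 h𝒢le Y1' D (μ := P) :=
    condIndepFun_congr_left (mΩ := mΩ) h𝒢le hig1 hY1'eq
  have hig0' : CondIndepFun 𝒢 h𝒢le Y0' D (μ := P) :=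
    condIndepFun_congr_left (mΩ := mΩ) h𝒢le hig0 hY0'eq
  have hDB : D ⁻¹' ({1} : Set ℕ) = B := by ext ω; simp [hB_def]
  have hprod1 : ∀ s : Set ℝ, MeasurableSet s →
      (P[((Y1' ⁻¹' s) ∩ B).indicator (fun _ => (1:ℝ)) | 𝒢]) =ᵐ[P]
        fun ω => (P[(Y1' ⁻¹' s).indicator (fun _ => (1:ℝ)) | 𝒢]) ω
          * (P[B.indicator (fun _ => (1:ℝ)) | 𝒢]) ω := by
    intro s hs
    have h := (condIndepFun_iff_condExp_inter_preimage_eq_mul (hm' := h𝒢le) (μ := P)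
      hY1'meas hD').mp hig1' s {1} hs (measurableSet_singleton 1)
    rwa [hDB] at h
  have hprod0 : ∀ s : Set ℝ, MeasurableSet s →
      (P[((Y0' ⁻¹' s) ∩ B).indicator (fun _ => (1:ℝ)) | 𝒢]) =ᵐ[P]
        fun ω => (P[(Y0' ⁻¹' s).indicator (fun _ => (1:ℝ)) | 𝒢]) ω
          * (P[B.indicator (fun _ => (1:ℝ)) | 𝒢]) ω := by
    intro s hs
    have h := (condIndepFun_iff_condExp_inter_preimage_eq_mul (hm' := h𝒢le) (μ := P)
      hY0'meas hD').mp hig0' s {1} hs (measurableSet_singleton 1)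
    rwa [hDB] at h
  -- key conditional expectation facts
  have hK1 : p₁ =ᵐ[P] P[B.indicator (fun _ => (1:ℝ)) |
      𝒢 ⊔ MeasurableSpace.comap Y1' Real.measurableSpace] :=
    keyK (mΩ := mΩ) h𝒢le P hY1'meas rfl rfl hBm hprod1 hp₁meas hp₁0 hp₁1 hp₁'
  have hK0 : p₁ =ᵐ[P] P[B.indicator (fun _ => (1:ℝ)) |
      𝒢 ⊔ MeasurableSpace.comap Y0' Real.measurableSpace] :=
    keyK (mΩ := mΩ) h𝒢le P hY0'meas rfl rfl hBm hprod0 hp₁meas hp₁0 hp₁1 hp₁'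
  have hH1 : (P[fun ω => Y1' ω * indB ω | 𝒢]) =ᵐ[P]
      fun ω => p₁ ω * (P[Y1'|𝒢]) ω :=
    condexp_mul_indicator_of_key (mΩ := mΩ) h𝒢le P hY1'meas hY1'int rfl hBm hp₁meas hp₁0 hp₁1 hK1
  have hH0 : (P[fun ω => Y0' ω * indB ω | 𝒢]) =ᵐ[P]
      fun ω => p₁ ω * (P[Y0'|𝒢]) ω :=
    condexp_mul_indicator_of_key (mΩ := mΩ) h𝒢le P hY0'meas hY0'int rfl hBm hp₁meas hp₁0 hp₁1 hK0
  -- integrability of products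
  have hint1B : Integrable (fun ω => Y1' ω * indB ω) P :=
    (hY1'int.bdd_mul hindB_asm (Filter.Eventually.of_forall hindB_bd)).congr
      (Eventually.of_forall fun ω => mul_comm _ _)
  have hint0B : Integrable (fun ω => Y0' ω * indB ω) P :=
    (hY0'int.bdd_mul hindB_asm (Filter.Eventually.of_forall hindB_bd)).congr
      (Eventually.of_forall fun ω => mul_comm _ _)
  have hYobs' : Yobs =ᵐ[P]
      ((fun ω => Y1' ω * indB ω) - (fun ω => Y0' ω * indB ω)) + Y0' := by
    filter_upwards [hY0'eq, hY1'eq] with ω h0 h1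
    simp only [Pi.add_apply, Pi.sub_apply]
    rw [hYobs ω, hdR ω, ← h0, ← h1]; ring
  have hYobsint : Integrable Yobs P :=
    (((hint1B.sub hint0B).add hY0'int)).congr hYobs'.symm
  -- g₂ = p₁ * E[Y1'|𝒢] + (1-p₁) * E[Y0'|𝒢] a.e.
  have hcondYobs : P[Yobs|𝒢] =ᵐ[P]
      fun ω => (p₁ ω * (P[Y1'|𝒢]) ω - p₁ ω * (P[Y0'|𝒢]) ω) + (P[Y0'|𝒢]) ω := by
    have e1 := condExp_add (m := 𝒢) (hint1B.sub hint0B) hY0'int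
    have e2 := condExp_sub (m := 𝒢) hint1B hint0B
    filter_upwards [condExp_congr_ae hYobs', e1, e2, hH1, hH0] with ω a b c d e
    simp only [Pi.add_apply, Pi.sub_apply] at a b c d e ⊢
    rw [a, b, c, d, e]
  have hg2g' : g₂ =ᵐ[P]
      fun ω => p₁ ω * (P[Y1'|𝒢]) ω + (1 - p₁ ω) * (P[Y0'|𝒢]) ω := by
    filter_upwards [hg₂, hcondYobs] with ω a b
    rw [a, b]; ring
  -- Y2 in terms of modifications
  have hY2' : Y2 =ᵐ[P] fun ω => p₁ ω * Y1' ω + (1 - p₁ ω) * Y0' ω := by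
    filter_upwards [hY0'eq, hY1'eq] with ω h0 h1
    rw [hY2 ω, ← h0, ← h1]
  have hintp₁Y1 : Integrable (fun ω => p₁ ω * Y1' ω) P :=
    hY1'int.bdd_mul hp₁asm (Filter.Eventually.of_forall hp₁bd)
  have hintmY0 : Integrable (fun ω => (1 - p₁ ω) * Y0' ω) P :=
    hY0'int.bdd_mul h1mp₁asm (Filter.Eventually.of_forall h1mp₁bd)
  have hY2int : Integrable Y2 P := (hintp₁Y1.add hintmY0).congr hY2'.symm
  have hintp₁Y1B : Integrable (fun ω => p₁ ω * (Y1' ω * indB ω)) P :=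
    hint1B.bdd_mul hp₁asm (Filter.Eventually.of_forall hp₁bd)
  have hintmY0B : Integrable (fun ω => (1 - p₁ ω) * (Y0' ω * indB ω)) P :=
    hint0B.bdd_mul h1mp₁asm (Filter.Eventually.of_forall h1mp₁bd)
  have hcm1int : Integrable (P[Y1'|𝒢]) P := integrable_condExp
  have hcm0int : Integrable (P[Y0'|𝒢]) P := integrable_condExp
  have hcm1asm : AEStronglyMeasurable[mΩ] (P[Y1'|𝒢]) P := hcm1int.1
  have hcm0asm : AEStronglyMeasurable[mΩ] (P[Y0'|𝒢]) P := hcm0int.1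
  have hintp₁cm1 : Integrable (fun ω => p₁ ω * (P[Y1'|𝒢]) ω) P :=
    hcm1int.bdd_mul hp₁asm (Filter.Eventually.of_forall hp₁bd)
  have hintmcm0 : Integrable (fun ω => (1 - p₁ ω) * (P[Y0'|𝒢]) ω) P :=
    hcm0int.bdd_mul h1mp₁asm (Filter.Eventually.of_forall h1mp₁bd)
  have hintp₁p₁cm1 : Integrable (fun ω => p₁ ω * (p₁ ω * (P[Y1'|𝒢]) ω)) P :=
    hintp₁cm1.bdd_mul hp₁asm (Filter.Eventually.of_forall hp₁bd)
  have hintmp₁cm0 : Integrable (fun ω => (1 - p₁ ω) * (p₁ ω * (P[Y0'|𝒢]) ω)) P := by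
    refine Integrable.bdd_mul ?_ h1mp₁asm (Filter.Eventually.of_forall h1mp₁bd)
    exact hcm0int.bdd_mul hp₁asm (Filter.Eventually.of_forall hp₁bd)
  -- numerator for d = 1
  have hN1 : ∫ ω, Y2 ω * indB ω ∂P
      = ∫ ω, p₁ ω * (p₁ ω * (P[Y1'|𝒢]) ω + (1 - p₁ ω) * (P[Y0'|𝒢]) ω) ∂P := by
    have e0 : (fun ω => Y2 ω * indB ω) =ᵐ[P]
        fun ω => p₁ ω * (Y1' ω * indB ω) + (1 - p₁ ω) * (Y0' ω * indB ω) := by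
      filter_upwards [hY2'] with ω h
      rw [h]; ring
    rw [integral_congr_ae e0, integral_add hintp₁Y1B hintmY0B]
    have t1 : ∫ ω, p₁ ω * (Y1' ω * indB ω) ∂P
        = ∫ ω, p₁ ω * (p₁ ω * (P[Y1'|𝒢]) ω) ∂P := by
      rw [int_mul_condexp h𝒢le P hp₁sm hint1B hintp₁Y1B]
      refine integral_congr_ae ?_
      filter_upwards [hH1] with ω h; rw [h]
    have t0 : ∫ ω, (1 - p₁ ω) * (Y0' ω * indB ω) ∂P
        = ∫ ω, (1 - p₁ ω) * (p₁ ω * (P[Y0'|𝒢]) ω) ∂P := by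
      rw [int_mul_condexp h𝒢le P h1mp₁sm hint0B hintmY0B]
      refine integral_congr_ae ?_
      filter_upwards [hH0] with ω h; rw [h]
    rw [t1, t0, ← integral_add hintp₁p₁cm1 hintmp₁cm0]
    exact integral_congr_ae (Eventually.of_forall fun ω => by ring)
  -- total integral of Y2
  have hNT : ∫ ω, Y2 ω ∂P
      = ∫ ω, (p₁ ω * (P[Y1'|𝒢]) ω + (1 - p₁ ω) * (P[Y0'|𝒢]) ω) ∂P := by
    rw [integral_congr_ae hY2', integral_add hintp₁Y1 hintmY0,
      int_mul_condexp h𝒢le P hp₁sm hY1'int hintp₁Y1,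
      int_mul_condexp h𝒢le P h1mp₁sm hY0'int hintmY0,
      ← integral_add hintp₁cm1 hintmcm0]
  -- T1 : the first part of the score has zero mean
  have hT1 : ∫ ω, (Yobs ω - g₂ ω) * (p₁ ω - P1) ∂P = 0 := by
    have hu_sm : StronglyMeasurable[𝒢] (fun ω => p₁ ω - P1) :=
      hp₁sm.sub stronglyMeasurable_const
    have hu_bd : ∀ ω, ‖p₁ ω - P1‖ ≤ 1 := fun ω => by
      rw [Real.norm_eq_abs, abs_le]
      constructor <;> nlinarith [hp₁0 ω, hp₁1 ω, hP1pos, hP1lt]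
    have hu_asm : AEStronglyMeasurable[mΩ] (fun ω => p₁ ω - P1) P :=
      ((hp₁mΩ.sub measurable_const : Measurable[mΩ] fun ω => p₁ ω - P1)).aestronglyMeasurable
    have hf_int : Integrable (Yobs - g₂) P := hYobsint.sub hg₂int
    have hprod_int : Integrable (fun ω => (p₁ ω - P1) * (Yobs - g₂) ω) P :=
      hf_int.bdd_mul hu_asm (Filter.Eventually.of_forall hu_bd)
    have hcond0 : P[Yobs - g₂|𝒢] =ᵐ[P] fun _ => (0:ℝ) := by
      have e := condExp_sub (m := 𝒢) hYobsint hg₂int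
      have eg : P[g₂|𝒢] = g₂ :=
        condExp_of_stronglyMeasurable h𝒢le hg₂meas.stronglyMeasurable hg₂int
      filter_upwards [e, hg₂] with ω a b
      simp only [Pi.sub_apply] at a ⊢
      rw [a, eg, ← b]
      ring
    have t : ∫ ω, (p₁ ω - P1) * (Yobs - g₂) ω ∂P = 0 := by
      rw [int_mul_condexp h𝒢le P hu_sm hf_int hprod_int]
      have : (fun ω => (p₁ ω - P1) * (P[Yobs - g₂|𝒢]) ω) =ᵐ[P] fun _ => (0:ℝ) := by
        filter_upwards [hcond0] with ω h; rw [h]; ring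
      rw [integral_congr_ae this, integral_zero]
    rw [← t]
    refine integral_congr_ae (Eventually.of_forall fun ω => ?_)
    simp only [Pi.sub_apply]; ring
  -- T2
  have hg₂indB_int : Integrable (fun ω => g₂ ω * indB ω) P :=
    (hg₂int.bdd_mul hindB_asm (Filter.Eventually.of_forall hindB_bd)).congr
      (Eventually.of_forall fun ω => mul_comm _ _)
  have hT2 : ∫ ω, g₂ ω * ((D ω : ℝ) - P1) ∂P
      = (∫ ω, g₂ ω * p₁ ω ∂P) - P1 * ∫ ω, g₂ ω ∂P := by
    have e0 : (fun ω => g₂ ω * ((D ω : ℝ) - P1)) =ᵐ[P]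
        fun ω => g₂ ω * indB ω - P1 * g₂ ω :=
      Eventually.of_forall fun ω => by simp only [hdR ω]; ring
    rw [integral_congr_ae e0, integral_sub hg₂indB_int (hg₂int.const_mul P1),
      integral_const_mul]
    congr 1
    rw [int_mul_condexp h𝒢le P hg₂meas.stronglyMeasurable hindBint hg₂indB_int]
    refine integral_congr_ae ?_
    filter_upwards [hp₁'] with ω h
    rw [← h]
  -- assembled RHS integral
  have hint_sc1 : Integrable (fun ω => (Yobs ω - g₂ ω) * (p₁ ω - P1)) P := by
    have hu_bd : ∀ ω, ‖p₁ ω - P1‖ ≤ 1 := fun ω => by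
      rw [Real.norm_eq_abs, abs_le]
      constructor <;> nlinarith [hp₁0 ω, hp₁1 ω, hP1pos, hP1lt]
    have hu_asm : AEStronglyMeasurable[mΩ] (fun ω => p₁ ω - P1) P :=
      ((hp₁mΩ.sub measurable_const : Measurable[mΩ] fun ω => p₁ ω - P1)).aestronglyMeasurable
    exact (((hYobsint.sub hg₂int).bdd_mul hu_asm (Filter.Eventually.of_forall hu_bd)).congr
      (Eventually.of_forall fun ω => by simp only [Pi.sub_apply]; ring))
  have hint_sc2 : Integrable (fun ω => g₂ ω * ((D ω : ℝ) - P1)) P := by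
    refine (hg₂indB_int.sub (hg₂int.const_mul P1)).congr
      (Eventually.of_forall fun ω => ?_)
    simp only [Pi.sub_apply, hdR ω]; ring
  have hRHS : ∫ ω, (Yobs ω - g₂ ω) * (p₁ ω - P1)
        + g₂ ω * ((D ω : ℝ) - P1) ∂P
      = (∫ ω, g₂ ω * p₁ ω ∂P) - P1 * ∫ ω, g₂ ω ∂P := by
    rw [integral_add hint_sc1 hint_sc2, hT1, hT2]; ring
  -- relate g₂ integrals to the explicit form
  have hgp : ∫ ω, g₂ ω * p₁ ω ∂P
      = ∫ ω, p₁ ω * (p₁ ω * (P[Y1'|𝒢]) ω + (1 - p₁ ω) * (P[Y0'|𝒢]) ω) ∂P := by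
    refine integral_congr_ae ?_
    filter_upwards [hg2g'] with ω h
    rw [h]; ring
  have hgt : ∫ ω, g₂ ω ∂P
      = ∫ ω, (p₁ ω * (P[Y1'|𝒢]) ω + (1 - p₁ ω) * (P[Y0'|𝒢]) ω) ∂P :=
    integral_congr_ae hg2g'
  -- unfold condMean
  have hiteB : (fun ω => Y2 ω * (if D ω = 1 then (1:ℝ) else 0))
      = fun ω => Y2 ω * indB ω := by
    funext ω
    by_cases h : D ω = 1
    · have hω : ω ∈ B := h
      rw [hindB_def]; rw [Set.indicator_of_mem hω]; simp [h]
    · have hω : ω ∉ B := h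
      rw [hindB_def]; rw [Set.indicator_of_notMem hω]; simp [h]
  have hiteBc : (fun ω => Y2 ω * (if D ω = 0 then (1:ℝ) else 0))
      = fun ω => Y2 ω - Y2 ω * indB ω := by
    funext ω
    rcases hD01 ω with h | h
    · have hω : ω ∉ B := by simp [hB_def, h]
      rw [hindB_def]; rw [Set.indicator_of_notMem hω]; simp [h]
    · have hω : ω ∈ B := h
      rw [hindB_def]; rw [Set.indicator_of_mem hω]
      simp [h]
  have hY2indBint : Integrable (fun ω => Y2 ω * indB ω) P :=
    (hY2int.bdd_mul hindB_asm (Filter.Eventually.of_forall hindB_bd)).congr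
      (Eventually.of_forall fun ω => mul_comm _ _)
  simp only [condMean]
  rw [← hB_def, hBc, hiteB, hiteBc, integral_sub hY2int hY2indBint, hPBc,
    hRHS, hgp, hgt, hN1, hNT]
  set a := ∫ ω, p₁ ω * (p₁ ω * (P[Y1'|𝒢]) ω + (1 - p₁ ω) * (P[Y0'|𝒢]) ω) ∂P with ha
  set b := ∫ ω, (p₁ ω * (P[Y1'|𝒢]) ω + (1 - p₁ ω) * (P[Y0'|𝒢]) ω) ∂P with hb
  have h1 : P1 ≠ 0 := ne_of_gt hP1pos
  have h2 : (1:ℝ) - P1 ≠ 0 := by linarith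
  field_simp
  change P1 * (a * (1 - P1) / P1 - (b - a)) = a - b * P1
  field_simp
  ring
end

section
/- (Explained part under Jann's pooled reference in the linear model.) In the linear model, let π = P(D = 1) and define the reference outcome Y(3) = π·Y(1) + (1 − π)·Y(0). Then the explained part Δ_X³ = E[Y(3) | D = 1] − E[Y(3) | D = 0] equals ⟨E[X | D = 1] − E[X | D = 0], β + π·δ⟩; that is, adding the group dummy in the pooled regression amounts to replacing the conditional weights p₁ by the unconditional probability π in the reference outcome. -/
/-!
Averaging the two potential outcomes with the constant weights `π` and `1 - π` keeps the
reference outcome in the linear model, `Y(3) = (α + π γ) + ⟨X, β + π δ⟩ + ε`. Conditional means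
given `D = d` are linear, and `ε` has conditional mean zero in each group because `{D = d}` is
`σ(X, D)`-measurable. The intercept `α + π γ` cancels in the difference of the two group means.
-/

open MeasureTheory ProbabilityTheory

section CondMean

variable {Ω : Type*} [MeasurableSpace Ω] {P : Measure Ω} {D : Ω → ℕ} {d : ℕ}

theorem condMean_eq_setIntegral_div (hs : MeasurableSet {ω | D ω = d}) (Z : Ω → ℝ) :
    condMean P Z D d = (∫ ω in {ω | D ω = d}, Z ω ∂P) / (P {ω | D ω = d}).toReal := by
  rw [condMean, ← integral_indicator hs]
  congr 2 with ω
  simp [Set.indicator_apply]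

theorem condMean_const [IsFiniteMeasure P] (hs : MeasurableSet {ω | D ω = d})
    (hpos : P {ω | D ω = d} ≠ 0) (c : ℝ) : condMean P (fun _ => c) D d = c := by
  rw [condMean_eq_setIntegral_div hs, setIntegral_const, smul_eq_mul, measureReal_def,
    mul_div_cancel_left₀ _ (ENNReal.toReal_ne_zero.2 ⟨hpos, measure_ne_top _ _⟩)]

theorem condMean_add (hs : MeasurableSet {ω | D ω = d}) {Z W : Ω → ℝ}
    (hZ : Integrable Z P) (hW : Integrable W P) :
    condMean P (fun ω => Z ω + W ω) D d = condMean P Z D d + condMean P W D d := by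
  simp only [condMean_eq_setIntegral_div hs]
  rw [integral_add hZ.integrableOn hW.integrableOn, add_div]

theorem condMean_sum (hs : MeasurableSet {ω | D ω = d}) {ι : Type*} (t : Finset ι)
    {Z : ι → Ω → ℝ} (hZ : ∀ i ∈ t, Integrable (Z i) P) :
    condMean P (fun ω => ∑ i ∈ t, Z i ω) D d = ∑ i ∈ t, condMean P (Z i) D d := by
  simp only [condMean_eq_setIntegral_div hs]
  rw [integral_finsetSum t fun i hi => (hZ i hi).integrableOn, Finset.sum_div]

theorem condMean_mul_const (Z : Ω → ℝ) (c : ℝ) :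
    condMean P (fun ω => Z ω * c) D d = condMean P Z D d * c := by
  simp only [condMean, mul_right_comm _ c, integral_mul_const, div_mul_eq_mul_div]

theorem condMean_affine [IsFiniteMeasure P] (hs : MeasurableSet {ω | D ω = d})
    (hpos : P {ω | D ω = d} ≠ 0) {ι : Type*} [Fintype ι] (c : ℝ) {X : Ω → ι → ℝ} (b : ι → ℝ)
    {e : Ω → ℝ} (hX : ∀ i, Integrable (fun ω => X ω i) P) (he : Integrable e P) :
    condMean P (fun ω => c + ∑ i, X ω i * b i + e ω) D d
      = c + ∑ i, condMean P (fun ω => X ω i) D d * b i + condMean P e D d := by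
  have hslope : ∀ i ∈ Finset.univ, Integrable (fun ω => X ω i * b i) P :=
    fun i _ => (hX i).mul_const _
  have hsum : Integrable (fun ω => ∑ i, X ω i * b i) P := integrable_finsetSum _ hslope
  rw [condMean_add hs ?_ he, condMean_add hs (integrable_const c) hsum, condMean_const hs hpos,
    condMean_sum hs _ hslope]
  · simp only [condMean_mul_const]
  · exact (integrable_const c).add hsum

end CondMean

theorem condMean_eq_zero_of_condExp_ae_eq_zero {Ω : Type*} {m m₀ : MeasurableSpace Ω}
    {P : Measure[m₀] Ω} [IsFiniteMeasure P] {D : Ω → ℕ} {d : ℕ} (hm : m ≤ m₀) {ε : Ω → ℝ}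
    (hε : Integrable ε P) (hce : P[ε | m] =ᵐ[P] 0) (hs : MeasurableSet[m] {ω | D ω = d}) :
    condMean P ε D d = 0 := by
  rw [condMean_eq_setIntegral_div (hm _ hs), ← setIntegral_condExp hm hε hs,
    integral_congr_ae (ae_restrict_of_ae hce)]
  simp

theorem measure_setOf_eq_zero_ne_zero {Ω : Type*} [MeasurableSpace Ω] {P : Measure Ω}
    [IsProbabilityMeasure P] {D : Ω → ℕ} (hD01 : ∀ ω, D ω = 0 ∨ D ω = 1)
    (hD1lt : P {ω | D ω = 1} < 1) : P {ω | D ω = 0} ≠ 0 := by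
  intro h0
  have hcover : Set.univ = {ω | D ω = 0} ∪ {ω | D ω = 1} := by
    ext ω; simpa using hD01 ω
  have : 1 ≤ P {ω | D ω = 1} := calc
    1 = P Set.univ := measure_univ.symm
    _ ≤ P {ω | D ω = 0} + P {ω | D ω = 1} := hcover ▸ measure_union_le _ _
    _ = P {ω | D ω = 1} := by rw [h0, zero_add]
  exact hD1lt.not_ge this

theorem stmt_18_general
    {Ω : Type*} [mΩ : MeasurableSpace Ω]
    (P : Measure Ω) [IsProbabilityMeasure P]
    {k : ℕ} (X : Ω → Fin k → ℝ) (hX : Measurable X)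
    (hXint : ∀ i, Integrable (fun ω => X ω i) P)
    (D : Ω → ℕ) (hD : Measurable D) (hD01 : ∀ ω, D ω = 0 ∨ D ω = 1)
    (hD1pos : 0 < P {ω | D ω = 1}) (hD1lt : P {ω | D ω = 1} < 1)
    (α γ : ℝ) (β δ : Fin k → ℝ)
    (ε : Ω → ℝ) (hεint : Integrable ε P)
    (hε : P[ε | MeasurableSpace.comap X inferInstance ⊔ MeasurableSpace.comap D inferInstance]
      =ᵐ[P] 0)
    (Y : ℕ → Ω → ℝ)
    (hY0 : ∀ ω, Y 0 ω = α + (∑ i, X ω i * β i) + ε ω)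
    (hY1 : ∀ ω, Y 1 ω = α + γ + (∑ i, X ω i * (β i + δ i)) + ε ω)
    (π : ℝ)
    (Y3 : Ω → ℝ) (hY3 : ∀ ω, Y3 ω = π * Y 1 ω + (1 - π) * Y 0 ω) :
    condMean P Y3 D 1 - condMean P Y3 D 0
      = ∑ i, (condMean P (fun ω => X ω i) D 1 - condMean P (fun ω => X ω i) D 0)
          * (β i + π * δ i) := by
  have hY3_linear : Y3 = fun ω => α + π * γ + ∑ i, X ω i * (β i + π * δ i) + ε ω := by
    funext ω
    have hslope : ∑ i, X ω i * (β i + π * δ i)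
        = π * ∑ i, X ω i * (β i + δ i) + (1 - π) * ∑ i, X ω i * β i := by
      rw [Finset.mul_sum, Finset.mul_sum, ← Finset.sum_add_distrib]
      exact Finset.sum_congr rfl fun i _ => by ring
    rw [hY3, hY0, hY1, hslope]
    ring
  have hm : MeasurableSpace.comap X inferInstance ⊔ MeasurableSpace.comap D inferInstance ≤ mΩ :=
    sup_le hX.comap_le hD.comap_le
  have hgroup_mean : ∀ d, P {ω | D ω = d} ≠ 0 → condMean P Y3 D d
      = α + π * γ + ∑ i, condMean P (fun ω => X ω i) D d * (β i + π * δ i) := by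
    intro d hpos
    have hs : MeasurableSet[MeasurableSpace.comap X inferInstance ⊔
        MeasurableSpace.comap D inferInstance] {ω | D ω = d} :=
      le_sup_right (a := MeasurableSpace.comap X inferInstance) _
        ⟨{d}, measurableSet_singleton d, rfl⟩
    rw [hY3_linear, condMean_affine (hm _ hs) hpos _ _ hXint hεint,
      condMean_eq_zero_of_condExp_ae_eq_zero hm hεint hε hs, add_zero]
  rw [hgroup_mean 1 hD1pos.ne', hgroup_mean 0 (measure_setOf_eq_zero_ne_zero hD01 hD1lt)]
  simp only [sub_mul, Finset.sum_sub_distrib]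
  ring

/-- explained part under Jann's pooled reference
`Y(3) = π·Y(1) + (1 - π)·Y(0)`, `π = P(D = 1)`, in the linear model. -/
theorem stmt_18
    {Ω : Type*} [mΩ : MeasurableSpace Ω]
    (P : Measure Ω) [IsProbabilityMeasure P]
    {k : ℕ} (X : Ω → Fin k → ℝ) (hX : Measurable X)
    (hXint : ∀ i, Integrable (fun ω => X ω i) P)
    (D : Ω → ℕ) (hD : Measurable D) (hD01 : ∀ ω, D ω = 0 ∨ D ω = 1)
    (hD1pos : 0 < P {ω | D ω = 1}) (hD1lt : P {ω | D ω = 1} < 1)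
    (α γ : ℝ) (β δ : Fin k → ℝ)
    (ε : Ω → ℝ) (hεint : Integrable ε P)
    (hε : P[ε | MeasurableSpace.comap X inferInstance ⊔ MeasurableSpace.comap D inferInstance]
      =ᵐ[P] 0)
    (Y : ℕ → Ω → ℝ)
    (hY0 : ∀ ω, Y 0 ω = α + (∑ i, X ω i * β i) + ε ω)
    (hY1 : ∀ ω, Y 1 ω = α + γ + (∑ i, X ω i * (β i + δ i)) + ε ω)
    (π : ℝ) (hπ : π = (P {ω | D ω = 1}).toReal)
    (Y3 : Ω → ℝ) (hY3 : ∀ ω, Y3 ω = π * Y 1 ω + (1 - π) * Y 0 ω) :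
    condMean P Y3 D 1 - condMean P Y3 D 0
      = ∑ i, (condMean P (fun ω => X ω i) D 1 - condMean P (fun ω => X ω i) D 0)
          * (β i + π * δ i) :=
  stmt_18_general (mΩ := mΩ) P X hX hXint D hD hD01 hD1pos hD1lt α γ β δ ε hεint hε Y hY0 hY1 π Y3
    hY3
end
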